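/- arXiv:0705.2975 — 6 statements merged into one kernel-verified Lean document; each statement's English description precedes it below -/
import Mathlib

section
/- Let K be a difference field of characteristic zero with field of constants C, and let A ∈ GL_n(K). Let S = K[U, 1/det(U)], with U ∈ GL_n(S) and σ(U) = AU, be a Picard-Vessiot ring for σ(X) = AX over K with C_S = C, and let L = K(V), with V ∈ GL_n(L) and σ(V) = AV, be a weak Picard-Vessiot field for σ(X) = AX over K. Let C̄ be an algebraic closure of C with trivial σ-action and set T = K[V, 1/det(V)] ⊆ L. Then S ⊗_C C̄ and T ⊗_C C̄ are isomorphic as difference rings; more precisely, any injective difference K-algebra homomorphism ρ : S → L ⊗_C C̄ as in the embedding theorem maps S ⊗_C C̄ isomorphically onto T ⊗_C C̄. -/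
open scoped TensorProduct

noncomputable section

namespace PV

set_option synthInstance.maxHeartbeats 1000000

/-! Basic difference-algebra vocabulary -/

theorem iter_mul {R : Type*} [Ring R] (σ : R ≃+* R) :
    ∀ (m : ℕ) (a b : R), (⇑σ)^[m] (a * b) = (⇑σ)^[m] a * (⇑σ)^[m] b := by
  intro m
  induction m with
  | zero => intro a b; rfl
  | succ k ih =>
    intro a b
    simp only [Function.iterate_succ_apply, map_mul]
    exact ih _ _

theorem iter_add {R : Type*} [Ring R] (σ : R ≃+* R) :
    ∀ (m : ℕ) (a b : R), (⇑σ)^[m] (a + b) = (⇑σ)^[m] a + (⇑σ)^[m] b := by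
  intro m
  induction m with
  | zero => intro a b; rfl
  | succ k ih =>
    intro a b
    simp only [Function.iterate_succ_apply, map_add]
    exact ih _ _

theorem iter_neg {R : Type*} [Ring R] (σ : R ≃+* R) :
    ∀ (m : ℕ) (a : R), (⇑σ)^[m] (-a) = -((⇑σ)^[m] a) := by
  intro m
  induction m with
  | zero => intro a; rfl
  | succ k ih =>
    intro a
    simp only [Function.iterate_succ_apply, map_neg]
    exact ih _

theorem iter_inv {K : Type*} [Field K] (σ : K ≃+* K) :
    ∀ (m : ℕ) (a : K), (⇑σ)^[m] a⁻¹ = ((⇑σ)^[m] a)⁻¹ := by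
  intro m
  induction m with
  | zero => intro a; rfl
  | succ k ih =>
    intro a
    simp only [Function.iterate_succ_apply, map_inv₀]
    exact ih _

/-- The subring of constants of a difference ring. -/
def constants {R : Type*} [Ring R] (σ : R ≃+* R) : Subring R where
  carrier := {r | σ r = r}
  one_mem' := map_one σ
  mul_mem' := fun {a b} ha hb => by
    simp only [Set.mem_setOf_eq] at *
    rw [map_mul, ha, hb]
  add_mem' := fun {a b} ha hb => by
    simp only [Set.mem_setOf_eq] at *
    rw [map_add, ha, hb]
  zero_mem' := map_zero σ
  neg_mem' := fun {a} ha => by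
    simp only [Set.mem_setOf_eq] at *
    rw [map_neg, ha]

/-- The subfield of constants of a difference field. -/
def constantsF {K : Type*} [Field K] (σ : K ≃+* K) : Subfield K :=
  { constants σ with
    inv_mem' := fun a ha => by
      show σ a⁻¹ = a⁻¹
      rw [map_inv₀]
      exact congrArg Inv.inv ha }

/-- The subring `D_R` of elements fixed by some positive power of `σ`. -/
def periodic {R : Type*} [Ring R] (σ : R ≃+* R) : Subring R where
  carrier := {a | ∃ m, 0 < m ∧ (⇑σ)^[m] a = a}
  one_mem' := ⟨1, one_pos, by simp⟩
  zero_mem' := ⟨1, one_pos, by simp⟩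
  mul_mem' := fun {a b} ha hb => by
    obtain ⟨m, hm, ha⟩ := ha
    obtain ⟨m', hm', hb⟩ := hb
    refine ⟨m * m', Nat.mul_pos hm hm', ?_⟩
    rw [iter_mul]
    have h1 : (⇑σ)^[m * m'] a = a := by
      rw [Function.iterate_mul]; exact Function.iterate_fixed ha m'
    have h2 : (⇑σ)^[m * m'] b = b := by
      rw [mul_comm, Function.iterate_mul]; exact Function.iterate_fixed hb m
    rw [h1, h2]
  add_mem' := fun {a b} ha hb => by
    obtain ⟨m, hm, ha⟩ := ha
    obtain ⟨m', hm', hb⟩ := hb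
    refine ⟨m * m', Nat.mul_pos hm hm', ?_⟩
    rw [iter_add]
    have h1 : (⇑σ)^[m * m'] a = a := by
      rw [Function.iterate_mul]; exact Function.iterate_fixed ha m'
    have h2 : (⇑σ)^[m * m'] b = b := by
      rw [mul_comm, Function.iterate_mul]; exact Function.iterate_fixed hb m
    rw [h1, h2]
  neg_mem' := fun {a} ha => by
    obtain ⟨m, hm, ha⟩ := ha
    exact ⟨m, hm, by rw [iter_neg, ha]⟩

/-- The subfield `D_L` of a difference field: elements fixed by some positive power of `σ`. -/
def periodicF {K : Type*} [Field K] (σ : K ≃+* K) : Subfield K :=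
  { periodic σ with
    inv_mem' := fun a ha => by
      obtain ⟨m, hm, ha⟩ := ha
      exact ⟨m, hm, by rw [iter_inv, ha]⟩ }

/-- The degree `[F : E]` of nested subfields of a field. -/
def subdeg {X : Type*} [Field X] (E F : Subfield X) (h : E ≤ F) : ℕ :=
  letI : Algebra E F := (Subfield.inclusion h).toAlgebra
  Module.finrank E F

/-- `F` is a finite extension of the subfield `E` (both subfields of a common field). -/
def SubfieldFinite {X : Type*} [Field X] (E F : Subfield X) : Prop :=
  ∃ h : E ≤ F,
    letI : Algebra E F := (Subfield.inclusion h).toAlgebra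
    Module.Finite E F

/-- `σR` extends `σk` along `algebraMap k R`. -/
def DiffCompat {k R : Type*} [CommRing k] [CommRing R] [Algebra k R]
    (σk : k ≃+* k) (σR : R ≃+* R) : Prop :=
  ∀ x : k, σR (algebraMap k R x) = algebraMap k R (σk x)

/-- the constants of `R` are (the image of) the constants of `k`: `C_R = C_k`. -/
def ConstantsMatch {k R : Type*} [CommRing k] [CommRing R] [Algebra k R]
    (σk : k ≃+* k) (σR : R ≃+* R) : Prop :=
  ∀ r : R, σR r = r → ∃ c : k, σk c = c ∧ algebraMap k R c = r

/-- A difference ring is simple if its only σ-invariant ideals are `⊥` and `⊤`. -/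
def IsSimpleDiff {R : Type*} [CommRing R] (σ : R ≃+* R) : Prop :=
  ∀ I : Ideal R, (∀ x ∈ I, σ x ∈ I) → I = ⊥ ∨ I = ⊤

/-- The set of entries of a square matrix. -/
def entries {R : Type*} {n : ℕ} (M : Matrix (Fin n) (Fin n) R) : Set R :=
  Set.range fun p : Fin n × Fin n => M p.1 p.2

/-- `Z` is a fundamental solution matrix for `σ(X) = A X`:  `σ Z = A Z` entrywise. -/
def FundMatrix {k R : Type*} {n : ℕ} [CommRing k] [CommRing R] [Algebra k R]
    (σR : R ≃+* R) (A : (Matrix (Fin n) (Fin n) k)ˣ) (Z : (Matrix (Fin n) (Fin n) R)ˣ) : Prop :=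
  Z.val.map ⇑σR = A.val.map (algebraMap k R) * Z.val

/-- `R` is a Picard-Vessiot ring for `σ(X) = A X` over `k`. -/
def IsPVRing {k R : Type*} {n : ℕ} [CommRing k] [CommRing R] [Algebra k R]
    (σk : k ≃+* k) (σR : R ≃+* R) (A : (Matrix (Fin n) (Fin n) k)ˣ) : Prop :=
  DiffCompat σk σR ∧ IsSimpleDiff σR ∧
    ∃ Z : (Matrix (Fin n) (Fin n) R)ˣ, FundMatrix σR A Z ∧
      Algebra.adjoin k (entries Z.val ∪ entries (↑Z⁻¹ : Matrix (Fin n) (Fin n) R)) = ⊤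

/-- `R` is a weak Picard-Vessiot ring for `σ(X) = A X` over `k`. -/
def IsWeakPVRing {k R : Type*} {n : ℕ} [CommRing k] [CommRing R] [Algebra k R]
    (σk : k ≃+* k) (σR : R ≃+* R) (A : (Matrix (Fin n) (Fin n) k)ˣ) : Prop :=
  DiffCompat σk σR ∧ ConstantsMatch σk σR ∧
    ∃ Z : (Matrix (Fin n) (Fin n) R)ˣ, FundMatrix σR A Z ∧
      Algebra.adjoin k (entries Z.val ∪ entries (↑Z⁻¹ : Matrix (Fin n) (Fin n) R)) = ⊤

/-! The generic difference ring `k[Y, 1/det Y]` -/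

/-- The generic `n × n` matrix with polynomial indeterminate entries. -/
def genMat (k : Type*) [CommRing k] (n : ℕ) :
    Matrix (Fin n) (Fin n) (MvPolynomial (Fin n × Fin n) k) :=
  Matrix.of fun i j => MvPolynomial.X (i, j)

/-- The generic ring `k[Y_{ij}, 1/det Y]`. -/
abbrev GenRing (k : Type*) [CommRing k] (n : ℕ) : Type _ :=
  Localization.Away (genMat k n).det

/-- The images of the indeterminates `Y_{ij}` in the generic ring. -/
def Yent (k : Type*) [CommRing k] (n : ℕ) (i j : Fin n) : GenRing k n :=
  algebraMap (MvPolynomial (Fin n × Fin n) k) (GenRing k n) (genMat k n i j)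

/-- The inverse of `det Y` in the generic ring. -/
def invDet (k : Type*) [CommRing k] (n : ℕ) : GenRing k n :=
  IsLocalization.Away.invSelf (genMat k n).det

/-- The transcendence degree of `L` over `F` equals `d`. -/
def TrdegEq (F L : Type*) [Field F] [Field L] [Algebra F L] (d : ℕ) : Prop :=
  ∃ s : Finset L, s.card = d ∧
    AlgebraicIndependent F (Subtype.val : ((s : Set L)) → L) ∧
    Algebra.IsAlgebraic (IntermediateField.adjoin F (s : Set L)) L

/-! decompositions into primitive idempotents and the `m`-invariant -/

/-- `e` lists the primitive idempotents of a difference ring, permuted cyclically by `σ`. -/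
def IsDecomp {R' : Type*} [CommRing R'] (σ' : R' ≃+* R') {ℓ : ℕ} (e : Fin ℓ → R') : Prop :=
  (∀ i, IsIdempotentElem (e i)) ∧
  (Pairwise fun i j => e i * e j = 0) ∧
  (∑ i, e i) = 1 ∧
  (∀ i, e i ≠ 0 ∧ ∀ f : R', IsIdempotentElem f → f * e i = f → f = 0 ∨ f = e i) ∧
  (∀ i : Fin ℓ, σ' (e i) = e ⟨(i.1 + 1) % ℓ, Nat.mod_lt _ (Nat.zero_lt_of_lt i.isLt)⟩)

/-- The `m`-invariant of a Picard-Vessiot ring `R'` over `K` equals `m`: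
`m = ℓ(R') * [D_{R₀*} : D_K · C_{R₀*}]`, where `R₀` is the quotient of `R'` by the ideal
generated by `1 - e₀`, and `R₀*` is its fraction field carrying the automorphism induced
by `σ'^ℓ`. -/
def HasMInvariant {K R' : Type*} [Field K] [CommRing R'] [Algebra K R']
    (σK : K ≃+* K) (σ' : R' ≃+* R') (m : ℕ) : Prop :=
  ∃ (ℓ : ℕ) (hℓ : 0 < ℓ) (e : Fin ℓ → R'), IsDecomp σ' e ∧
    ∀ (hdom : IsDomain (R' ⧸ Ideal.span {1 - e ⟨0, hℓ⟩})),
      letI : IsDomain (R' ⧸ Ideal.span {1 - e ⟨0, hℓ⟩}) := hdom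
      ∀ (σQ : FractionRing (R' ⧸ Ideal.span {1 - e ⟨0, hℓ⟩}) ≃+*
              FractionRing (R' ⧸ Ideal.span {1 - e ⟨0, hℓ⟩})),
        (∀ x : R',
            σQ (algebraMap (R' ⧸ Ideal.span {1 - e ⟨0, hℓ⟩})
                  (FractionRing (R' ⧸ Ideal.span {1 - e ⟨0, hℓ⟩}))
                  (Ideal.Quotient.mk (Ideal.span {1 - e ⟨0, hℓ⟩}) x)) =
            algebraMap (R' ⧸ Ideal.span {1 - e ⟨0, hℓ⟩})
                  (FractionRing (R' ⧸ Ideal.span {1 - e ⟨0, hℓ⟩}))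
                  (Ideal.Quotient.mk (Ideal.span {1 - e ⟨0, hℓ⟩}) ((⇑σ')^[ℓ] x))) →
        ∃ h : Subfield.closure
              ((⇑((algebraMap (R' ⧸ Ideal.span {1 - e ⟨0, hℓ⟩})
                    (FractionRing (R' ⧸ Ideal.span {1 - e ⟨0, hℓ⟩}))).comp
                  ((Ideal.Quotient.mk (Ideal.span {1 - e ⟨0, hℓ⟩})).comp (algebraMap K R'))) ''
                 {a : K | ∃ m', 0 < m' ∧ (⇑σK)^[m'] a = a}) ∪
               (constantsF σQ : Set (FractionRing (R' ⧸ Ideal.span {1 - e ⟨0, hℓ⟩})))) ≤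
              periodicF σQ,
          m = ℓ * subdeg _ _ h

/-!
The map `S ⊗_C C̄ → L ⊗_C C̄`, `s ⊗ c ↦ ρ(s) (1 ⊗ c)`, commutes with `σ`, and `S ⊗_C C̄` is a
simple difference ring because `S` is simple with constants `C`; so this map is injective.
By flatness `T ⊗_C C̄` also embeds into `L ⊗_C C̄`. Both images are generated over `K` and
`1 ⊗ C̄` by the entries of a fundamental matrix and its inverse, namely `ρ(U)` and `V ⊗ 1`.
Two fundamental matrices differ by a `σ`-constant matrix, and since `C_L = C` the constants
of `L ⊗_C C̄` are `1 ⊗ C̄`; hence the two images coincide.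
-/

section TrivialExtension

variable {C A V : Type*} [Field C] [CommRing A] [Algebra C A] [CommRing V] [Algebra C V]
  {σA : A ≃+* A} {σ : A ⊗[C] V ≃+* A ⊗[C] V}

lemma baseChange_repr_map (hσ : ∀ (a : A) (v : V), σ (a ⊗ₜ v) = σA a ⊗ₜ v)
    (hfix : ∀ c : C, σA (algebraMap C A c) = algebraMap C A c)
    {ι : Type*} (b : Module.Basis ι C V) (x : A ⊗[C] V) (i : ι) :
    (b.baseChange A).repr (σ x) i = σA ((b.baseChange A).repr x i) := by
  induction x using TensorProduct.induction_on with
  | zero => simp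
  | tmul a v =>
    simp only [hσ, Module.Basis.baseChange_repr_tmul, Algebra.smul_def, map_mul, hfix]
  | add x y hx hy => simp only [map_add, Finsupp.add_apply, hx, hy]

lemma exists_eq_one_tmul_of_map_eq_self (hσ : ∀ (a : A) (v : V), σ (a ⊗ₜ v) = σA a ⊗ₜ v)
    (hfix : ∀ c : C, σA (algebraMap C A c) = algebraMap C A c)
    (hconst : ∀ a : A, σA a = a → ∃ c : C, algebraMap C A c = a)
    {x : A ⊗[C] V} (hx : σ x = x) : ∃ v : V, x = 1 ⊗ₜ v := by
  let b := Module.Basis.ofVectorSpace C V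
  suffices x ∈ (Algebra.TensorProduct.includeRight : V →ₐ[C] A ⊗[C] V).range by
    obtain ⟨v, rfl⟩ := this
    exact ⟨v, rfl⟩
  rw [← (b.baseChange A).linearCombination_repr x, Finsupp.linearCombination_apply]
  refine Subalgebra.sum_mem _ fun i _ => ?_
  obtain ⟨c, hc⟩ := hconst _ <| by rw [← baseChange_repr_map hσ hfix b x i, hx]
  rw [← hc]
  dsimp only
  rw [algebraMap_smul, Module.Basis.baseChange_apply]
  exact Subalgebra.smul_mem _ (AlgHom.mem_range_self _ (b i)) c

end TrivialExtension

section SimpleExtension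

variable {C A V : Type*} [Field C] [CommRing A] [Algebra C A] [Field V] [Algebra C V]
  {σA : A ≃+* A} {σ : A ⊗[C] V ≃+* A ⊗[C] V} {ι : Type*}

lemma support_baseChange_repr_map (hσ : ∀ (a : A) (v : V), σ (a ⊗ₜ v) = σA a ⊗ₜ v)
    (hfix : ∀ c : C, σA (algebraMap C A c) = algebraMap C A c)
    (b : Module.Basis ι C V) (x : A ⊗[C] V) :
    ((b.baseChange A).repr (σ x)).support = ((b.baseChange A).repr x).support := by
  ext i
  simp [baseChange_repr_map hσ hfix]

lemma exists_mem_baseChange_repr_eq_one (hσ : ∀ (a : A) (v : V), σ (a ⊗ₜ v) = σA a ⊗ₜ v)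
    (hfix : ∀ c : C, σA (algebraMap C A c) = algebraMap C A c) (hsimple : IsSimpleDiff σA)
    (b : Module.Basis ι C V) {I : Ideal (A ⊗[C] V)} (hI : ∀ x ∈ I, σ x ∈ I)
    {x : A ⊗[C] V} (hx : x ∈ I) {i : ι} (hi : (b.baseChange A).repr x i ≠ 0) :
    ∃ y ∈ I, ((b.baseChange A).repr y).support ⊆ ((b.baseChange A).repr x).support ∧
      (b.baseChange A).repr y i = 1 := by
  set B := b.baseChange A
  let J : Ideal A :=
    { carrier := {a | ∃ y ∈ I, (B.repr y).support ⊆ (B.repr x).support ∧ B.repr y i = a}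
      zero_mem' := ⟨0, I.zero_mem, by simp, by simp⟩
      add_mem' := by
        classical
        rintro _ _ ⟨y, hy, hys, rfl⟩ ⟨z, hz, hzs, rfl⟩
        refine ⟨y + z, I.add_mem hy hz, ?_, by simp⟩
        rw [map_add]
        exact Finsupp.support_add.trans (Finset.union_subset hys hzs)
      smul_mem' := by
        rintro a _ ⟨y, hy, hys, rfl⟩
        refine ⟨a • y, Submodule.smul_of_tower_mem I a hy, ?_, by simp⟩
        rw [map_smul]
        exact Finsupp.support_smul.trans hys }
  have hJσ : ∀ a ∈ J, σA a ∈ J := by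
    rintro _ ⟨y, hy, hys, rfl⟩
    exact ⟨σ y, hI y hy, (support_baseChange_repr_map hσ hfix b y).trans_subset hys,
      baseChange_repr_map hσ hfix b y i⟩
  have hJ : J = ⊤ := (hsimple J hJσ).resolve_left fun h =>
    hi <| (Submodule.eq_bot_iff J).mp h _ ⟨x, hx, subset_rfl, rfl⟩
  exact (Ideal.eq_top_iff_one J).mp hJ

/-- Induction on the support, in a basis of `V` over `C`, of a nonzero element `x` of a `σ`-ideal:
the ideal contains some `y` supported inside `x` with a coordinate equal to `1`, so `σ y - y` has
smaller support; if it vanishes, `y` is a nonzero constant, hence a unit. -/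
theorem isSimpleDiff_tensorProduct [Nontrivial A]
    (hσ : ∀ (a : A) (v : V), σ (a ⊗ₜ v) = σA a ⊗ₜ v)
    (hfix : ∀ c : C, σA (algebraMap C A c) = algebraMap C A c)
    (hconst : ∀ a : A, σA a = a → ∃ c : C, algebraMap C A c = a) (hsimple : IsSimpleDiff σA) :
    IsSimpleDiff σ := by
  classical
  intro I hI
  refine or_iff_not_imp_left.mpr fun hI0 => ?_
  obtain ⟨x, hxI, hx0⟩ := Submodule.exists_mem_ne_zero_of_ne_bot hI0
  set B := (Module.Basis.ofVectorSpace C V).baseChange A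
  have hB : ∀ y j, B.repr (σ y) j = σA (B.repr y j) := baseChange_repr_map hσ hfix _
  induction hk : (B.repr x).support.card using Nat.strong_induction_on generalizing x with
  | _ k ih =>
  obtain ⟨i, hi⟩ := Finsupp.support_nonempty_iff.mpr ((LinearEquiv.map_ne_zero_iff B.repr).mpr hx0)
  obtain ⟨y, hyI, hys, hyi⟩ := exists_mem_baseChange_repr_eq_one hσ hfix hsimple _ hI hxI
    (Finsupp.mem_support_iff.mp hi)
  have hy0 : y ≠ 0 := by
    rintro rfl
    simp at hyi
  have hzs : (B.repr (σ y - y)).support ⊆ (B.repr x).support.erase i := by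
    intro j hj
    have hj' : σA (B.repr y j) - B.repr y j ≠ 0 := by
      simpa [hB] using hj
    refine Finset.mem_erase.mpr ⟨fun hji => hj' (by rw [hji, hyi, map_one, sub_self]), hys ?_⟩
    exact Finsupp.mem_support_iff.mpr fun h => hj' (by rw [h, map_zero, sub_zero])
  by_cases hz : σ y - y = 0
  · obtain ⟨v, rfl⟩ := exists_eq_one_tmul_of_map_eq_self hσ hfix hconst (sub_eq_zero.mp hz)
    have hv : v ≠ 0 := by
      rintro rfl
      simp at hy0
    refine I.eq_top_of_isUnit_mem hyI (IsUnit.of_mul_eq_one (1 ⊗ₜ v⁻¹) ?_)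
    rw [Algebra.TensorProduct.tmul_mul_tmul, one_mul, mul_inv_cancel₀ hv]
    rfl
  · refine ih _ ?_ _ (sub_mem (hI y hyI) hyI) hz rfl
    calc (B.repr (σ y - y)).support.card ≤ ((B.repr x).support.erase i).card :=
          Finset.card_le_card hzs
      _ < k := hk ▸ Finset.card_erase_lt_of_mem hi

end SimpleExtension

section FundamentalMatrix

open Matrix.GeneralLinearGroup (map)

lemma GeneralLinearGroup.map_map {R S T : Type*} [CommRing R] [CommRing S] [CommRing T] {n : ℕ}
    (f : R →+* S) (g : S →+* T) (Z : GL (Fin n) R) : map g (map f Z) = map (g.comp f) Z :=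
  rfl

variable {k R : Type*} [CommRing k] [CommRing R] [Algebra k R] {n : ℕ}
  {σk : k ≃+* k} {σR : R ≃+* R} {A : GL (Fin n) k} {Z Z' : GL (Fin n) R}

lemma fundMatrix_iff : FundMatrix σR A Z ↔ map (σR : R →+* R) Z = map (algebraMap k R) A * Z := by
  rw [FundMatrix, Units.ext_iff]
  rfl

lemma FundMatrix.map_inv_mul_eq (hZ : FundMatrix σR A Z) (hZ' : FundMatrix σR A Z') :
    map (σR : R →+* R) (Z⁻¹ * Z') = Z⁻¹ * Z' := by
  rw [fundMatrix_iff] at hZ hZ'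
  rw [map_mul, map_inv, hZ, hZ']
  group

lemma FundMatrix.map_algHom {R' : Type*} [CommRing R'] [Algebra k R'] {σR' : R' ≃+* R'}
    (f : R →ₐ[k] R') (hf : ∀ x, f (σR x) = σR' (f x)) (hZ : FundMatrix σR A Z) :
    FundMatrix σR' A (map (f : R →+* R') Z) := by
  rw [fundMatrix_iff] at hZ ⊢
  have hcomm : (σR' : R' →+* R').comp f = (f : R →+* R').comp σR :=
    RingHom.ext fun x => (hf x).symm
  rw [GeneralLinearGroup.map_map, hcomm, ← GeneralLinearGroup.map_map, hZ, map_mul,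
    GeneralLinearGroup.map_map, AlgHom.comp_algebraMap]

lemma DiffCompat.symm (h : DiffCompat σk σR) : DiffCompat σk.symm σR.symm := fun x => by
  rw [RingEquiv.symm_apply_eq, h, RingEquiv.apply_symm_apply]

lemma FundMatrix.symm (h : DiffCompat σk σR) (hZ : FundMatrix σR A Z) :
    FundMatrix σR.symm (map (σk.symm : k →+* k) A)⁻¹ Z := by
  rw [fundMatrix_iff] at hZ ⊢
  have hcomm : (σR.symm : R →+* R).comp (algebraMap k R) = (algebraMap k R).comp σk.symm :=
    RingHom.ext h.symm
  have hid : (σR.symm : R →+* R).comp σR = RingHom.id R := RingHom.ext σR.symm_apply_apply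
  have hback := congrArg (map (σR.symm : R →+* R)) hZ
  rw [map_mul, GeneralLinearGroup.map_map, GeneralLinearGroup.map_map, hid, hcomm,
    Matrix.GeneralLinearGroup.map_id, MonoidHom.id_apply, ← GeneralLinearGroup.map_map] at hback
  rw [map_inv, eq_inv_mul_iff_mul_eq, ← hback]

end FundamentalMatrix

section AdjoinEntries

open Matrix.GeneralLinearGroup (map)

/-- The ring `k[Z, 1/det Z]`. -/
abbrev adjoinEntries (k : Type*) {R : Type*} [CommRing k] [CommRing R] [Algebra k R] {n : ℕ}
    (Z : GL (Fin n) R) : Subalgebra k R :=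
  Algebra.adjoin k (entries Z.val ∪ entries (↑Z⁻¹ : Matrix (Fin n) (Fin n) R))

variable {k R : Type*} [CommRing k] [CommRing R] [Algebra k R] {n : ℕ}

lemma entries_mul_subset {P : Subalgebra k R} {M N : Matrix (Fin n) (Fin n) R}
    (hM : entries M ⊆ P) (hN : entries N ⊆ P) : entries (M * N) ⊆ P := by
  rintro _ ⟨⟨i, j⟩, rfl⟩
  change (M * N) i j ∈ P
  rw [Matrix.mul_apply]
  exact Subalgebra.sum_mem _ fun l _ => mul_mem (hM ⟨(i, l), rfl⟩) (hN ⟨(l, j), rfl⟩)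

lemma entries_map_algebraMap_subset (P : Subalgebra k R) (M : Matrix (Fin n) (Fin n) k) :
    entries (M.map (algebraMap k R)) ⊆ P := by
  rintro _ ⟨⟨i, j⟩, rfl⟩
  exact P.algebraMap_mem _

lemma entries_map {R' : Type*} [CommRing R'] (f : R →+* R') (Z : GL (Fin n) R) :
    entries (map f Z).val = f '' entries Z.val := by
  rw [entries, entries, ← Set.range_comp]
  rfl

lemma entries_subset_adjoinEntries (Z : GL (Fin n) R) :
    entries Z.val ⊆ adjoinEntries k Z :=
  Set.subset_union_left.trans Algebra.subset_adjoin

lemma entries_inv_subset_adjoinEntries (Z : GL (Fin n) R) :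
    entries (↑Z⁻¹ : Matrix (Fin n) (Fin n) R) ⊆ adjoinEntries k Z :=
  Set.subset_union_right.trans Algebra.subset_adjoin

lemma adjoinEntries_map {R' : Type*} [CommRing R'] [Algebra k R'] (f : R →ₐ[k] R')
    (Z : GL (Fin n) R) : (adjoinEntries k Z).map f = adjoinEntries k (map (f : R →+* R') Z) := by
  rw [adjoinEntries, adjoinEntries, ← map_inv, entries_map, entries_map, AlgHom.map_adjoin,
    Set.image_union]
  rfl

variable {σk : k ≃+* k} {σR : R ≃+* R} {A : GL (Fin n) k} {Z : GL (Fin n) R}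

lemma map_mem_adjoinEntries (h : DiffCompat σk σR) (hZ : FundMatrix σR A Z) {x : R}
    (hx : x ∈ adjoinEntries k Z) : σR x ∈ adjoinEntries k Z := by
  rw [fundMatrix_iff] at hZ
  have hZsub : entries (map (σR : R →+* R) Z).val ⊆ adjoinEntries k Z := by
    rw [hZ]
    exact entries_mul_subset (entries_map_algebraMap_subset _ _) (entries_subset_adjoinEntries Z)
  have hZinvsub : entries (map (σR : R →+* R) Z⁻¹).val ⊆ adjoinEntries k Z := by
    rw [map_inv, hZ, mul_inv_rev, ← map_inv]
    exact entries_mul_subset (entries_inv_subset_adjoinEntries Z)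
      (entries_map_algebraMap_subset _ _)
  induction hx using Algebra.adjoin_induction with
  | mem x hx =>
    rcases hx with ⟨⟨i, j⟩, rfl⟩ | ⟨⟨i, j⟩, rfl⟩
    · exact hZsub ⟨(i, j), rfl⟩
    · exact hZinvsub ⟨(i, j), rfl⟩
  | algebraMap r => rw [h]; exact Subalgebra.algebraMap_mem _ _
  | add x y _ _ hx hy => rw [map_add]; exact add_mem hx hy
  | mul x y _ _ hx hy => rw [map_mul]; exact mul_mem hx hy

lemma map_mem_adjoinEntries_iff (h : DiffCompat σk σR) (hZ : FundMatrix σR A Z) {x : R} :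
    σR x ∈ adjoinEntries k Z ↔ x ∈ adjoinEntries k Z :=
  ⟨fun hx => by simpa using map_mem_adjoinEntries h.symm (hZ.symm h) hx,
    map_mem_adjoinEntries h hZ⟩

end AdjoinEntries

section Ranges


variable {C K R : Type*} [CommRing C] [CommRing K] [CommRing R] [Algebra C K] [Algebra K R]
  [Algebra C R] [IsScalarTower C K R] {n : ℕ}

lemma adjoinEntries_mul_sup_le (D : Subalgebra C R) (M X : GL (Fin n) R) (hX : entries X.val ⊆ D)
    (hX' : entries (↑X⁻¹ : Matrix (Fin n) (Fin n) R) ⊆ D) :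
    (adjoinEntries K (M * X)).restrictScalars C ⊔ D ≤
      (adjoinEntries K M).restrictScalars C ⊔ D := by
  set P := (adjoinEntries K M).restrictScalars C ⊔ D
  have hM : ((adjoinEntries K M).restrictScalars C : Set R) ⊆ P := le_sup_left (b := D)
  have hD : (D : Set R) ⊆ P := le_sup_right (a := (adjoinEntries K M).restrictScalars C)
  refine sup_le ?_ le_sup_right
  rw [Algebra.Subalgebra.restrictScalars_adjoin]
  refine sup_le ?_ (Algebra.adjoin_le (Set.union_subset ?_ ?_))
  · rintro _ ⟨r, rfl⟩
    exact hM ((adjoinEntries K M).algebraMap_mem r)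
  · exact entries_mul_subset ((entries_subset_adjoinEntries M).trans hM) (hX.trans hD)
  · rw [mul_inv_rev]
    exact entries_mul_subset (hX'.trans hD) ((entries_inv_subset_adjoinEntries M).trans hM)

lemma adjoinEntries_mul_sup_eq (D : Subalgebra C R) (M X : GL (Fin n) R) (hX : entries X.val ⊆ D)
    (hX' : entries (↑X⁻¹ : Matrix (Fin n) (Fin n) R) ⊆ D) :
    (adjoinEntries K (M * X)).restrictScalars C ⊔ D =
      (adjoinEntries K M).restrictScalars C ⊔ D := by
  refine le_antisymm (adjoinEntries_mul_sup_le D M X hX hX') ?_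
  simpa using adjoinEntries_mul_sup_le (K := K) D (M * X) X⁻¹ hX' (by simpa using hX)

end Ranges

section FundMatrixTensor

open Matrix.GeneralLinearGroup (map)

variable {C K L V : Type*} [Field C] [CommRing K] [CommRing L] [Field V] [Algebra C K]
  [Algebra K L] [Algebra C L] [IsScalarTower C K L] [Algebra C V]
  {σL : L ≃+* L} {σ : L ⊗[C] V ≃+* L ⊗[C] V} {n : ℕ}

lemma entries_subset_range_includeRight (hσ : ∀ (a : L) (v : V), σ (a ⊗ₜ v) = σL a ⊗ₜ v)
    (hfix : ∀ c : C, σL (algebraMap C L c) = algebraMap C L c)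
    (hconst : ∀ a : L, σL a = a → ∃ c : C, algebraMap C L c = a)
    {X : GL (Fin n) (L ⊗[C] V)} (hX : map (σ : L ⊗[C] V →+* L ⊗[C] V) X = X) :
    entries X.val ⊆ (Algebra.TensorProduct.includeRight : V →ₐ[C] L ⊗[C] V).range := by
  rintro _ ⟨⟨i, j⟩, rfl⟩
  have hij : σ (X.val i j) = X.val i j := congrArg (fun M : GL (Fin n) _ => M.val i j) hX
  obtain ⟨v, hv⟩ := exists_eq_one_tmul_of_map_eq_self hσ hfix hconst hij
  exact ⟨v, hv.symm⟩

lemma FundMatrix.adjoinEntries_sup_range_includeRight_eq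
    (hσ : ∀ (a : L) (v : V), σ (a ⊗ₜ v) = σL a ⊗ₜ v)
    (hfix : ∀ c : C, σL (algebraMap C L c) = algebraMap C L c)
    (hconst : ∀ a : L, σL a = a → ∃ c : C, algebraMap C L c = a)
    {A : GL (Fin n) K} {Z Z' : GL (Fin n) (L ⊗[C] V)} (hZ : FundMatrix σ A Z)
    (hZ' : FundMatrix σ A Z') :
    (adjoinEntries K Z').restrictScalars C ⊔ (Algebra.TensorProduct.includeRight).range =
      (adjoinEntries K Z).restrictScalars C ⊔ (Algebra.TensorProduct.includeRight).range := by
  have hX := hZ.map_inv_mul_eq hZ'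
  have hX' : map (σ : L ⊗[C] V →+* L ⊗[C] V) (Z⁻¹ * Z')⁻¹ = (Z⁻¹ * Z')⁻¹ := by
    rw [map_inv, hX]
  simpa using adjoinEntries_mul_sup_eq _ Z (Z⁻¹ * Z')
    (entries_subset_range_includeRight hσ hfix hconst hX)
    (entries_subset_range_includeRight hσ hfix hconst hX')

end FundMatrixTensor

section DifferenceMaps

variable {C k R : Type*} [CommRing C] [CommRing k] [CommRing R] [Algebra C k] [Algebra k R]
  [Algebra C R] [IsScalarTower C k R] {σk : k ≃+* k} {σR : R ≃+* R}

lemma DiffCompat.map_algebraMap_of_isScalarTower (h : DiffCompat σk σR)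
    (hC : ∀ c : C, σk (algebraMap C k c) = algebraMap C k c) (c : C) :
    σR (algebraMap C R c) = algebraMap C R c := by
  rw [IsScalarTower.algebraMap_apply C k R, h, hC]

lemma ConstantsMatch.exists_algebraMap_eq (h : ConstantsMatch σk σR)
    (hC : ∀ x : k, σk x = x → x ∈ (algebraMap C k).range) (r : R) (hr : σR r = r) :
    ∃ c : C, algebraMap C R c = r := by
  obtain ⟨x, hx, rfl⟩ := h r hr
  obtain ⟨c, rfl⟩ := hC x hx
  exact ⟨c, IsScalarTower.algebraMap_apply C k R c⟩

end DifferenceMaps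

lemma injective_of_isSimpleDiff {R R' : Type*} [CommRing R] [CommRing R'] [Nontrivial R']
    {σ : R ≃+* R} {σ' : R' ≃+* R'} (hσ : IsSimpleDiff σ) (f : R →+* R')
    (hf : ∀ x, f (σ x) = σ' (f x)) : Function.Injective f := by
  refine (injective_iff_map_eq_zero f).mpr fun x hx => ?_
  have hker : ∀ y ∈ RingHom.ker f, σ y ∈ RingHom.ker f := fun y hy => by
    rw [RingHom.mem_ker, hf, RingHom.mem_ker.mp hy, map_zero]
  exact (RingHom.ker_eq_bot_iff_eq_zero f).mp
    ((hσ _ hker).resolve_right (RingHom.ker_ne_top f)) x hx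

section RTensor

variable {C A V : Type*} [CommRing C] [CommRing A] [CommRing V] [Algebra C A] [Algebra C V]
  (σ : A ≃+* A) (hσ : ∀ c : C, σ (algebraMap C A c) = algebraMap C A c)

def rTensorEquiv : A ⊗[C] V ≃+* A ⊗[C] V :=
  (Algebra.TensorProduct.congr (AlgEquiv.ofRingEquiv hσ) AlgEquiv.refl).toRingEquiv

lemma rTensorEquiv_tmul (a : A) (v : V) : rTensorEquiv σ hσ (a ⊗ₜ v) = σ a ⊗ₜ v :=
  rfl

lemma map_rTensorEquiv_of_tmul {B F : Type*} [Ring B] [FunLike F (A ⊗[C] V) B]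
    [AddMonoidHomClass F (A ⊗[C] V) B] (f : F) {σB : B ≃+* B}
    (hf : ∀ (a : A) (v : V), f (σ a ⊗ₜ v) = σB (f (a ⊗ₜ v))) (x : A ⊗[C] V) :
    f (rTensorEquiv σ hσ x) = σB (f x) := by
  induction x using TensorProduct.induction_on with
  | zero => simp only [map_zero]
  | tmul a v => exact hf a v
  | add x y hx hy => simp only [map_add, hx, hy]

end RTensor

lemma exists_algEquiv_comp_eq_of_range_eq {R A A' B : Type*} [CommRing R] [Ring A] [Ring A']
    [Ring B] [Algebra R A] [Algebra R A'] [Algebra R B] {f : A →ₐ[R] B} {g : A' →ₐ[R] B}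
    (hf : Function.Injective f) (hg : Function.Injective g) (h : f.range = g.range) :
    ∃ e : A ≃ₐ[R] A', ∀ x, g (e x) = f x := by
  refine ⟨(AlgEquiv.ofInjective f hf).trans
    ((Subalgebra.equivOfEq _ _ h).trans (AlgEquiv.ofInjective g hg).symm), fun x => ?_⟩
  exact congrArg Subtype.val ((AlgEquiv.ofInjective g hg).apply_symm_apply
    (Subalgebra.equivOfEq _ _ h (AlgEquiv.ofInjective f hf x)))

section TensorRanges

open Matrix.GeneralLinearGroup (map)

variable {C K R V : Type*} [CommRing C] [CommRing K] [CommRing R] [CommRing V] [Algebra C K]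
  [Algebra K R] [Algebra C R] [IsScalarTower C K R] [Algebra C V] {n : ℕ}

lemma range_productMap_eq_adjoinEntries_sup {S : Type*} [CommRing S] [Algebra K S] [Algebra C S]
    [IsScalarTower C K S] (f : S →ₐ[K] R) (g : V →ₐ[C] R) {U : GL (Fin n) S}
    (hU : adjoinEntries K U = ⊤) :
    (Algebra.TensorProduct.productMap (f.restrictScalars C) g).range =
      (adjoinEntries K (map (f : S →+* R) U)).restrictScalars C ⊔ g.range := by
  rw [Algebra.TensorProduct.productMap_range, ← adjoinEntries_map, hU, Algebra.map_top]
  rfl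

lemma range_map_val_eq_adjoinEntries_sup (Z : GL (Fin n) R) :
    (Algebra.TensorProduct.map ((adjoinEntries K Z).val.restrictScalars C) (AlgHom.id C V)).range =
      (adjoinEntries K (map ((Algebra.TensorProduct.includeLeft : R →ₐ[K] R ⊗[C] V) :
        R →+* R ⊗[C] V) Z)).restrictScalars C ⊔ (Algebra.TensorProduct.includeRight).range := by
  rw [Algebra.TensorProduct.map_range, ← adjoinEntries_map]
  congr 1
  ext
  simp

end TensorRanges

theorem statement_3_general {K : Type} [Field K] (σK : K ≃+* K)
    {C : Type} [Field C] [Algebra C K]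
    (hC : ∀ x : K, σK x = x ↔ x ∈ (algebraMap C K).range)
    {n : ℕ} (A : (Matrix (Fin n) (Fin n) K)ˣ)
    -- the Picard-Vessiot ring S = K[U, 1/det U] with C_S = C
    {S : Type} [CommRing S] [Algebra K S] (σS : S ≃+* S)
    (U : (Matrix (Fin n) (Fin n) S)ˣ) (hU : FundMatrix σS A U)
    (hSgen : Algebra.adjoin K
      (entries U.val ∪ entries (↑U⁻¹ : Matrix (Fin n) (Fin n) S)) = ⊤)
    (hSPV : IsPVRing σK σS A) (hSconst : ConstantsMatch σK σS)
    -- the weak Picard-Vessiot field L = K(V)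
    {L : Type} [Field L] [Algebra K L] (σL : L ≃+* L)
    (hKL : DiffCompat σK σL) (hLconst : ConstantsMatch σK σL)
    (V : (Matrix (Fin n) (Fin n) L)ˣ) (hV : FundMatrix σL A V)
    -- the algebraic closure C̄ of C, with trivial σ-action
    {Cb : Type} [Field Cb] [Algebra C Cb]
    [Algebra C L] [IsScalarTower C K L] [Algebra C S] [IsScalarTower C K S]
    -- σ on L ⊗_C C̄ and the embedding ρ as in the embedding theorem
    (σ₂ : L ⊗[C] Cb ≃+* L ⊗[C] Cb)
    (hσ₂ : ∀ (v : L) (c : Cb), σ₂ (v ⊗ₜ[C] c) = σL v ⊗ₜ[C] c)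
    (ρ : S →ₐ[K] L ⊗[C] Cb)
    (hρσ : ∀ s, ρ (σS s) = σ₂ (ρ s)) :
    -- T = K[V, 1/det V], a difference subring of L
    ∃ σT : (Algebra.adjoin K (entries V.val ∪ entries (↑V⁻¹ : Matrix (Fin n) (Fin n) L))) ≃+*
           (Algebra.adjoin K (entries V.val ∪ entries (↑V⁻¹ : Matrix (Fin n) (Fin n) L))),
      (∀ t : (Algebra.adjoin K (entries V.val ∪ entries (↑V⁻¹ : Matrix (Fin n) (Fin n) L))),
        (σT t : L) = σL ↑t) ∧
      -- ρ induces an isomorphism of difference rings S ⊗_C C̄ ≅ T ⊗_C C̄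
      ∃ (σS' : S ⊗[C] Cb ≃+* S ⊗[C] Cb)
        (σT' : (Algebra.adjoin K (entries V.val ∪ entries (↑V⁻¹ : Matrix (Fin n) (Fin n) L)))
                 ⊗[C] Cb ≃+*
               (Algebra.adjoin K (entries V.val ∪ entries (↑V⁻¹ : Matrix (Fin n) (Fin n) L)))
                 ⊗[C] Cb)
        (E : S ⊗[C] Cb ≃+*
             (Algebra.adjoin K (entries V.val ∪ entries (↑V⁻¹ : Matrix (Fin n) (Fin n) L)))
               ⊗[C] Cb),
        (∀ (s : S) (c : Cb), σS' (s ⊗ₜ[C] c) = σS s ⊗ₜ[C] c) ∧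
        (∀ (t : (Algebra.adjoin K (entries V.val ∪ entries (↑V⁻¹ : Matrix (Fin n) (Fin n) L))))
           (c : Cb), σT' (t ⊗ₜ[C] c) = σT t ⊗ₜ[C] c) ∧
        (∀ x, E (σS' x) = σT' (E x)) ∧
        -- E is induced by ρ: composing with the inclusion T ⊗ C̄ → L ⊗ C̄ recovers ρ
        (∀ (s : S) (c : Cb),
          (Algebra.TensorProduct.map
            ((Algebra.adjoin K (entries V.val ∪
                entries (↑V⁻¹ : Matrix (Fin n) (Fin n) L))).val.restrictScalars C)
            (AlgHom.id C Cb)) (E (s ⊗ₜ[C] c)) = ρ s * ((1 : L) ⊗ₜ[C] c)) := by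
  obtain ⟨hKS, hSsimple, -⟩ := hSPV
  have hCK : ∀ c : C, σK (algebraMap C K c) = algebraMap C K c := fun c => (hC _).mpr ⟨c, rfl⟩
  have hCS := hKS.map_algebraMap_of_isScalarTower hCK
  have hCL := hKL.map_algebraMap_of_isScalarTower hCK
  set T := adjoinEntries K V
  let σT : T ≃+* T := σL.restrict T T fun _ => (map_mem_adjoinEntries_iff hKL hV).symm
  have hCT : ∀ c : C, σT (algebraMap C T c) = algebraMap C T c := fun c => Subtype.ext (hCL c)
  let φ := Algebra.TensorProduct.productMap (ρ.restrictScalars C) Algebra.TensorProduct.includeRight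
  let ι := Algebra.TensorProduct.map (T.val.restrictScalars C) (AlgHom.id C Cb)
  have hφσ := map_rTensorEquiv_of_tmul σS hCS φ (σB := σ₂) fun s c => by simp [φ, hρσ, hσ₂]
  have hισ := map_rTensorEquiv_of_tmul σT hCT ι (σB := σ₂) fun t c => by simp [ι, σT, hσ₂]
  have hφ : Function.Injective φ := by
    have : Nontrivial S := ρ.toRingHom.domain_nontrivial
    exact injective_of_isSimpleDiff (isSimpleDiff_tensorProduct (rTensorEquiv_tmul σS hCS) hCS
      (hSconst.exists_algebraMap_eq fun x => (hC x).mp) hSsimple) φ.toRingHom hφσ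
  have hι : Function.Injective ι :=
    Module.Flat.rTensor_preserves_injective_linearMap (T.val.restrictScalars C).toLinearMap
      Subtype.val_injective
  have hrange : φ.range = ι.range := by
    rw [range_productMap_eq_adjoinEntries_sup _ _ hSgen, range_map_val_eq_adjoinEntries_sup]
    exact FundMatrix.adjoinEntries_sup_range_includeRight_eq hσ₂ hCL
      (hLconst.exists_algebraMap_eq fun x => (hC x).mp)
      (hV.map_algHom _ fun v => (hσ₂ v 1).symm) (hU.map_algHom ρ hρσ)
  obtain ⟨E, hE⟩ := exists_algEquiv_comp_eq_of_range_eq hφ hι hrange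
  refine ⟨σT, fun _ => rfl, rTensorEquiv σS hCS, rTensorEquiv σT hCT, E.toRingEquiv,
    rTensorEquiv_tmul σS hCS, rTensorEquiv_tmul σT hCT, fun x => hι ?_, fun s c => hE _⟩
  change ι (E _) = ι (rTensorEquiv σT hCT (E x))
  rw [hE, hισ, hE, hφσ]

/-- Any injective difference `K`-algebra embedding `ρ : S → L ⊗_C C̄` of the
Picard-Vessiot ring `S` maps `S ⊗_C C̄` isomorphically (as difference rings) onto
`T ⊗_C C̄`, where `T = K[V, 1/det V] ⊆ L`. -/
theorem statement_3 {K : Type} [Field K] [CharZero K] (σK : K ≃+* K)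
    {C : Type} [Field C] [Algebra C K]
    (hC : ∀ x : K, σK x = x ↔ x ∈ (algebraMap C K).range)
    {n : ℕ} (A : (Matrix (Fin n) (Fin n) K)ˣ)
    -- the Picard-Vessiot ring S = K[U, 1/det U] with C_S = C
    {S : Type} [CommRing S] [Algebra K S] (σS : S ≃+* S)
    (U : (Matrix (Fin n) (Fin n) S)ˣ) (hU : FundMatrix σS A U)
    (hSgen : Algebra.adjoin K
      (entries U.val ∪ entries (↑U⁻¹ : Matrix (Fin n) (Fin n) S)) = ⊤)
    (hSPV : IsPVRing σK σS A) (hSconst : ConstantsMatch σK σS)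
    -- the weak Picard-Vessiot field L = K(V)
    {L : Type} [Field L] [Algebra K L] (σL : L ≃+* L)
    (hKL : DiffCompat σK σL) (hLconst : ConstantsMatch σK σL)
    (V : (Matrix (Fin n) (Fin n) L)ˣ) (hV : FundMatrix σL A V)
    (hLgen : IntermediateField.adjoin K (entries V.val) = ⊤)
    -- the algebraic closure C̄ of C, with trivial σ-action
    {Cb : Type} [Field Cb] [Algebra C Cb] [IsAlgClosure C Cb]
    [Algebra C L] [IsScalarTower C K L] [Algebra C S] [IsScalarTower C K S]
    -- σ on L ⊗_C C̄ and the embedding ρ as in the embedding theorem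
    (σ₂ : L ⊗[C] Cb ≃+* L ⊗[C] Cb)
    (hσ₂ : ∀ (v : L) (c : Cb), σ₂ (v ⊗ₜ[C] c) = σL v ⊗ₜ[C] c)
    (ρ : S →ₐ[K] L ⊗[C] Cb) (hρinj : Function.Injective ρ)
    (hρσ : ∀ s, ρ (σS s) = σ₂ (ρ s)) :
    -- T = K[V, 1/det V], a difference subring of L
    ∃ σT : (Algebra.adjoin K (entries V.val ∪ entries (↑V⁻¹ : Matrix (Fin n) (Fin n) L))) ≃+*
           (Algebra.adjoin K (entries V.val ∪ entries (↑V⁻¹ : Matrix (Fin n) (Fin n) L))),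
      (∀ t : (Algebra.adjoin K (entries V.val ∪ entries (↑V⁻¹ : Matrix (Fin n) (Fin n) L))),
        (σT t : L) = σL ↑t) ∧
      -- ρ induces an isomorphism of difference rings S ⊗_C C̄ ≅ T ⊗_C C̄
      ∃ (σS' : S ⊗[C] Cb ≃+* S ⊗[C] Cb)
        (σT' : (Algebra.adjoin K (entries V.val ∪ entries (↑V⁻¹ : Matrix (Fin n) (Fin n) L)))
                 ⊗[C] Cb ≃+*
               (Algebra.adjoin K (entries V.val ∪ entries (↑V⁻¹ : Matrix (Fin n) (Fin n) L)))
                 ⊗[C] Cb)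
        (E : S ⊗[C] Cb ≃+*
             (Algebra.adjoin K (entries V.val ∪ entries (↑V⁻¹ : Matrix (Fin n) (Fin n) L)))
               ⊗[C] Cb),
        (∀ (s : S) (c : Cb), σS' (s ⊗ₜ[C] c) = σS s ⊗ₜ[C] c) ∧
        (∀ (t : (Algebra.adjoin K (entries V.val ∪ entries (↑V⁻¹ : Matrix (Fin n) (Fin n) L))))
           (c : Cb), σT' (t ⊗ₜ[C] c) = σT t ⊗ₜ[C] c) ∧
        (∀ x, E (σS' x) = σT' (E x)) ∧
        -- E is induced by ρ: composing with the inclusion T ⊗ C̄ → L ⊗ C̄ recovers ρ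
        (∀ (s : S) (c : Cb),
          (Algebra.TensorProduct.map
            ((Algebra.adjoin K (entries V.val ∪
                entries (↑V⁻¹ : Matrix (Fin n) (Fin n) L))).val.restrictScalars C)
            (AlgHom.id C Cb)) (E (s ⊗ₜ[C] c)) = ρ s * ((1 : L) ⊗ₜ[C] c)) :=
  statement_3_general σK hC A σS U hU hSgen hSPV hSconst σL hKL hLconst V hV σ₂ hσ₂ ρ hρσ

end PV
end
end

section
/- Let K be a difference field of characteristic zero, A ∈ GL_n(K), and R = K[Z, 1/det(Z)] a weak Picard-Vessiot ring for σ(X) = AX over K (so Z ∈ GL_n(R), σ(Z) = AZ, and C_R = C_K). For every difference K-algebra automorphism φ of R, the matrix M_φ := Z^{-1}·φ(Z) (φ applied entrywise) has all entries in C_K and lies in GL_n(C_K), and the map φ ↦ M_φ is an injective group homomorphism from the group of difference K-algebra automorphisms of R into GL_n(C_K). -/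
open scoped TensorProduct

noncomputable section

namespace PV

set_option synthInstance.maxHeartbeats 1000000

/-! `Z` and `φ(Z)` both solve `σ(X) = A X`, so `M_φ = Z⁻¹ φ(Z)` is fixed by `σ` and hence lies in
`GL_n(C_K)`. Since `φ` fixes the entries of `M_ψ`, which come from `K`, we get
`φψ(Z) = φ(Z M_ψ) = φ(Z) M_ψ`. Finally a `K`-algebra map of `R` is determined by its values on
the generators, the entries of `Z` and `Z⁻¹`. -/

section GaloisMatrix

variable {K R : Type*} [CommRing R] {n : Type*}

theorem map_map_eq_mul_of_commute [Fintype n] {F G : Type*} [FunLike F R R]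
    [RingHomClass F R R] [FunLike G R R] [RingHomClass G R R] {σ : F} {φ : G}
    (hφ : ∀ r, φ (σ r) = σ (φ r)) {B Z : Matrix n n R} (hB : B.map φ = B)
    (hZ : Z.map σ = B * Z) :
    (Z.map φ).map σ = B * Z.map φ := by
  have hcomm : (Z.map φ).map σ = (Z.map σ).map φ := by
    simp only [Matrix.map_map, Function.comp_def, hφ]
  rw [hcomm, hZ, Matrix.map_mul, hB]

/-- Writing `W = Z M`, the two relations give `B Z σ(M) = B Z M`, and `B Z` is invertible. -/
theorem map_inv_mul_eq_of_map_eq_mul [Fintype n] [DecidableEq n] {F : Type*} [FunLike F R R]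
    [RingHomClass F R R] (σ : F) {B : Matrix n n R} (hB : IsUnit B) (Z : (Matrix n n R)ˣ)
    {W : Matrix n n R} (hZ : Z.val.map σ = B * Z.val) (hW : W.map σ = B * W) :
    ((↑Z⁻¹ : Matrix n n R) * W).map σ = (↑Z⁻¹ : Matrix n n R) * W := by
  refine (hB.mul Z.isUnit).mul_left_cancel ?_
  calc B * Z.val * ((↑Z⁻¹ : Matrix n n R) * W).map σ
      = (Z.val * ((↑Z⁻¹ : Matrix n n R) * W)).map σ := by
        rw [Matrix.map_mul (L := Z.val), hZ]
    _ = B * Z.val * ((↑Z⁻¹ : Matrix n n R) * W) := by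
        rw [Z.mul_inv_cancel_left, hW, mul_assoc, Z.mul_inv_cancel_left]

variable [Field K] [Algebra K R]

theorem map_algebraMap_map_algHom {F : Type*} [FunLike F R R] [AlgHomClass F K R R] (φ : F)
    (N : Matrix n n K) :
    (N.map (algebraMap K R)).map φ = N.map (algebraMap K R) := by
  simp only [Matrix.map_map, Function.comp_def, AlgHomClass.commutes]

variable [Fintype n] [DecidableEq n]

theorem isUnit_of_isUnit_map_algebraMap [Nontrivial R] {N : Matrix n n K}
    (hN : IsUnit (N.map (algebraMap K R))) : IsUnit N := by
  rw [Matrix.isUnit_iff_isUnit_det] at hN ⊢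
  rw [← RingHom.mapMatrix_apply, ← RingHom.map_det] at hN
  exact IsUnit.of_map (algebraMap K R) _ hN

theorem exists_units_map_algebraMap_eq {σK : K ≃+* K} {σR : R ≃+* R}
    (hconst : ConstantsMatch σK σR) {M : Matrix n n R} (hM : IsUnit M)
    (hfix : ∀ i j, σR (M i j) = M i j) :
    ∃ N : (Matrix n n K)ˣ, (∀ i j, σK (N.val i j) = N.val i j) ∧
      N.val.map (algebraMap K R) = M := by
  rcases subsingleton_or_nontrivial R with hR | hR
  · refine ⟨1, fun i j => ?_, Subsingleton.elim _ _⟩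
    rcases eq_or_ne i j with rfl | hij <;> simp [*]
  · choose c hc hcM using fun i j => hconst _ (hfix i j)
    have hmap : (Matrix.of c).map (algebraMap K R) = M := Matrix.ext hcM
    exact ⟨(isUnit_of_isUnit_map_algebraMap (hmap ▸ hM)).unit, hc, hmap⟩

theorem inv_mul_map_comp_eq_mul {F : Type*} [FunLike F R R] [AlgHomClass F K R R]
    (Z : (Matrix n n R)ˣ) (φ ψ : F)
    (hψ : ∃ N : Matrix n n K, N.map (algebraMap K R) = (↑Z⁻¹ : Matrix n n R) * Z.val.map ψ) :
    (↑Z⁻¹ : Matrix n n R) * Z.val.map (fun r => φ (ψ r)) =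
      ((↑Z⁻¹ : Matrix n n R) * Z.val.map φ) * ((↑Z⁻¹ : Matrix n n R) * Z.val.map ψ) := by
  obtain ⟨N, hN⟩ := hψ
  have hfixed : ((↑Z⁻¹ : Matrix n n R) * Z.val.map ψ).map φ =
      (↑Z⁻¹ : Matrix n n R) * Z.val.map ψ := by
    rw [← hN, map_algebraMap_map_algHom]
  calc (↑Z⁻¹ : Matrix n n R) * Z.val.map (fun r => φ (ψ r))
      = (↑Z⁻¹ : Matrix n n R) * (Z.val * ((↑Z⁻¹ : Matrix n n R) * Z.val.map ψ)).map φ := by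
        rw [Z.mul_inv_cancel_left, Matrix.map_map, Function.comp_def]
    _ = ((↑Z⁻¹ : Matrix n n R) * Z.val.map φ) * ((↑Z⁻¹ : Matrix n n R) * Z.val.map ψ) := by
        rw [Matrix.map_mul, hfixed, mul_assoc]

end GaloisMatrix

theorem algHom_ext_of_map_eq {K R : Type*} [Field K] [CommRing R] [Algebra K R] {m : ℕ}
    (Z : (Matrix (Fin m) (Fin m) R)ˣ)
    (hgen : Algebra.adjoin K (entries Z.val ∪ entries (↑Z⁻¹ : Matrix (Fin m) (Fin m) R)) = ⊤)
    {φ ψ : R →ₐ[K] R} (h : Z.val.map φ = Z.val.map ψ) : φ = ψ := by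
  have hunits : Units.map (φ : R →+* R).mapMatrix.toMonoidHom Z =
      Units.map (ψ : R →+* R).mapMatrix.toMonoidHom Z := Units.ext h
  have hinv :
      (↑Z⁻¹ : Matrix (Fin m) (Fin m) R).map φ = (↑Z⁻¹ : Matrix (Fin m) (Fin m) R).map ψ := by
    simpa using congrArg (fun U : (Matrix (Fin m) (Fin m) R)ˣ => (U⁻¹).val) hunits
  refine AlgHom.ext_of_adjoin_eq_top hgen ?_
  rintro x (⟨⟨i, j⟩, rfl⟩ | ⟨⟨i, j⟩, rfl⟩)
  · exact congrFun (congrFun h i) j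
  · exact congrFun (congrFun hinv i) j

theorem statement_4_general {K : Type} [Field K] (σK : K ≃+* K)
    {n : ℕ} (A : (Matrix (Fin n) (Fin n) K)ˣ)
    {R : Type} [CommRing R] [Algebra K R] (σR : R ≃+* R)
    (hconst : ConstantsMatch σK σR)
    (Z : (Matrix (Fin n) (Fin n) R)ˣ) (hZ : FundMatrix σR A Z)
    (hgen : Algebra.adjoin K
      (entries Z.val ∪ entries (↑Z⁻¹ : Matrix (Fin n) (Fin n) R)) = ⊤) :
    -- each M_φ has constant entries coming from C_K and lies in GL_n(C_K)
    (∀ φ : R ≃ₐ[K] R, (∀ r, φ (σR r) = σR (φ r)) →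
      (∀ i j, σR (((↑Z⁻¹ : Matrix (Fin n) (Fin n) R) * Z.val.map ⇑φ) i j) =
        ((↑Z⁻¹ : Matrix (Fin n) (Fin n) R) * Z.val.map ⇑φ) i j) ∧
      ∃ N : (Matrix (Fin n) (Fin n) K)ˣ, (∀ i j, σK (N.val i j) = N.val i j) ∧
        N.val.map (algebraMap K R) = (↑Z⁻¹ : Matrix (Fin n) (Fin n) R) * Z.val.map ⇑φ) ∧
    -- φ ↦ M_φ is multiplicative (a group homomorphism)
    (∀ φ ψ : R ≃ₐ[K] R, (∀ r, φ (σR r) = σR (φ r)) → (∀ r, ψ (σR r) = σR (ψ r)) →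
      (↑Z⁻¹ : Matrix (Fin n) (Fin n) R) * Z.val.map (fun r => φ (ψ r)) =
        ((↑Z⁻¹ : Matrix (Fin n) (Fin n) R) * Z.val.map ⇑φ) *
          ((↑Z⁻¹ : Matrix (Fin n) (Fin n) R) * Z.val.map ⇑ψ)) ∧
    -- φ ↦ M_φ is injective
    (∀ φ ψ : R ≃ₐ[K] R, (∀ r, φ (σR r) = σR (φ r)) → (∀ r, ψ (σR r) = σR (ψ r)) →
      (↑Z⁻¹ : Matrix (Fin n) (Fin n) R) * Z.val.map ⇑φ =
        (↑Z⁻¹ : Matrix (Fin n) (Fin n) R) * Z.val.map ⇑ψ → φ = ψ) := by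
  have hA : IsUnit (A.val.map (algebraMap K R)) := A.isUnit.map (algebraMap K R).mapMatrix
  have hfixed (φ : R ≃ₐ[K] R) (hφ : ∀ r, φ (σR r) = σR (φ r)) :
      ((↑Z⁻¹ : Matrix (Fin n) (Fin n) R) * Z.val.map φ).map σR =
        (↑Z⁻¹ : Matrix (Fin n) (Fin n) R) * Z.val.map φ :=
    map_inv_mul_eq_of_map_eq_mul σR hA Z hZ
      (map_map_eq_mul_of_commute hφ (map_algebraMap_map_algHom φ A.val) hZ)
  have hconstant (φ : R ≃ₐ[K] R) (hφ : ∀ r, φ (σR r) = σR (φ r)) :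
      ∃ N : (Matrix (Fin n) (Fin n) K)ˣ, (∀ i j, σK (N.val i j) = N.val i j) ∧
        N.val.map (algebraMap K R) = (↑Z⁻¹ : Matrix (Fin n) (Fin n) R) * Z.val.map φ :=
    exists_units_map_algebraMap_eq hconst
      ((Z⁻¹).isUnit.mul (Z.isUnit.map (φ : R →+* R).mapMatrix))
      (fun i j => congrFun (congrFun (hfixed φ hφ) i) j)
  refine ⟨fun φ hφ => ⟨fun i j => congrFun (congrFun (hfixed φ hφ) i) j, hconstant φ hφ⟩,
    fun φ ψ _ hψ => ?_, fun φ ψ _ _ h => ?_⟩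
  · obtain ⟨N, -, hN⟩ := hconstant ψ hψ
    exact inv_mul_map_comp_eq_mul Z φ ψ ⟨N, hN⟩
  · exact AlgEquiv.coe_toAlgHom_injective
      (algHom_ext_of_map_eq Z hgen ((Z⁻¹).isUnit.mul_left_cancel h))

/-- For a weak Picard-Vessiot ring `R = K[Z, 1/det Z]`, every difference
`K`-algebra automorphism `φ` gives a matrix `M_φ = Z⁻¹ · φ(Z)` with entries in `C_K`
lying in `GL_n(C_K)`, and `φ ↦ M_φ` is an injective group homomorphism into `GL_n(C_K)`. -/
theorem statement_4 {K : Type} [Field K] [CharZero K] (σK : K ≃+* K)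
    {n : ℕ} (A : (Matrix (Fin n) (Fin n) K)ˣ)
    {R : Type} [CommRing R] [Algebra K R] (σR : R ≃+* R)
    (hcompat : DiffCompat σK σR) (hconst : ConstantsMatch σK σR)
    (Z : (Matrix (Fin n) (Fin n) R)ˣ) (hZ : FundMatrix σR A Z)
    (hgen : Algebra.adjoin K
      (entries Z.val ∪ entries (↑Z⁻¹ : Matrix (Fin n) (Fin n) R)) = ⊤) :
    -- each M_φ has constant entries coming from C_K and lies in GL_n(C_K)
    (∀ φ : R ≃ₐ[K] R, (∀ r, φ (σR r) = σR (φ r)) →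
      (∀ i j, σR (((↑Z⁻¹ : Matrix (Fin n) (Fin n) R) * Z.val.map ⇑φ) i j) =
        ((↑Z⁻¹ : Matrix (Fin n) (Fin n) R) * Z.val.map ⇑φ) i j) ∧
      ∃ N : (Matrix (Fin n) (Fin n) K)ˣ, (∀ i j, σK (N.val i j) = N.val i j) ∧
        N.val.map (algebraMap K R) = (↑Z⁻¹ : Matrix (Fin n) (Fin n) R) * Z.val.map ⇑φ) ∧
    -- φ ↦ M_φ is multiplicative (a group homomorphism)
    (∀ φ ψ : R ≃ₐ[K] R, (∀ r, φ (σR r) = σR (φ r)) → (∀ r, ψ (σR r) = σR (ψ r)) →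
      (↑Z⁻¹ : Matrix (Fin n) (Fin n) R) * Z.val.map (fun r => φ (ψ r)) =
        ((↑Z⁻¹ : Matrix (Fin n) (Fin n) R) * Z.val.map ⇑φ) *
          ((↑Z⁻¹ : Matrix (Fin n) (Fin n) R) * Z.val.map ⇑ψ)) ∧
    -- φ ↦ M_φ is injective
    (∀ φ ψ : R ≃ₐ[K] R, (∀ r, φ (σR r) = σR (φ r)) → (∀ r, ψ (σR r) = σR (ψ r)) →
      (↑Z⁻¹ : Matrix (Fin n) (Fin n) R) * Z.val.map ⇑φ =
        (↑Z⁻¹ : Matrix (Fin n) (Fin n) R) * Z.val.map ⇑ψ → φ = ψ) :=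
  statement_4_general σK A σR hconst Z hZ hgen

end PV
end
end

section
/- Let k be a difference field of characteristic zero, A ∈ GL_n(k), and R a Picard-Vessiot ring for σ(X) = AX over k with C_R = C_k. Let B be a commutative C_k-algebra, and equip R ⊗_{C_k} B with the automorphism σ(r ⊗ b) = σ(r) ⊗ b (so σ acts as the identity on B). Then every σ-invariant ideal N of R ⊗_{C_k} B is generated, as an ideal of R ⊗_{C_k} B, by N ∩ (1 ⊗ B). -/
open scoped TensorProduct

noncomputable section

namespace PV

set_option synthInstance.maxHeartbeats 1000000

/-!
Let `J ⊆ B` consist of the `b` with `1 ⊗ b ∈ N`. By right exactness of `R ⊗[C] -`, it suffices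
that the image of `N` in `R ⊗ (B/J)` vanishes. This image is a σ-stable `R`-submodule containing
no nonzero `1 ⊗ v`. Write its elements in coordinates with respect to a `C`-basis of `B/J`: for a
nonzero element with minimal support, the coefficients at a fixed index of elements with that
support form a nonzero σ-stable ideal of `R`, hence contain `1`; for an element `g` with
coefficient `1` there, `σ g - g` has smaller support, so `σ` fixes every coefficient of `g`.
Then `g` has coefficients in `C = C_R`, i.e. it is some `1 ⊗ v`, hence `g = 0`: a contradiction.
-/

section

variable {R : Type*} [CommRing R] {σ : R ≃+* R} {ι : Type*}

theorem IsSimpleDiff.finsupp_eq_bot (hσ : IsSimpleDiff σ) {M : Submodule R (ι →₀ R)}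
    (hM : ∀ f ∈ M, f.mapRange σ (map_zero σ) ∈ M)
    (hfix : ∀ f ∈ M, (∀ i, σ (f i) = f i) → f = 0) : M = ⊥ := by
  classical
  suffices key : ∀ (s : Finset ι) (f : ι →₀ R), f ∈ M → f.support ⊆ s → f = 0 from
    (Submodule.eq_bot_iff M).2 fun f hf => key _ f hf subset_rfl
  intro s
  induction s using Finset.strongInduction with
  | H s ih =>
  intro f hf hfs
  by_contra hf0
  obtain ⟨i, hi⟩ := Finsupp.support_nonempty_iff.2 hf0
  let I : Ideal R := (M ⊓ Finsupp.supported R R (s : Set ι)).map (Finsupp.lapply i)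
  have hI : ∀ r ∈ I, σ r ∈ I := by
    rintro _ ⟨g, ⟨hgM, hgs⟩, rfl⟩
    refine ⟨g.mapRange σ (map_zero σ), ⟨hM g hgM, ?_⟩, rfl⟩
    exact (Finsupp.mem_supported R _).2 <|
      (Finset.coe_subset.2 Finsupp.support_mapRange).trans ((Finsupp.mem_supported R g).1 hgs)
  have hfi : f i ∈ I := ⟨f, ⟨hf, (Finsupp.mem_supported R f).2 (by simpa)⟩, rfl⟩
  have hI_ne_bot : I ≠ ⊥ := fun hbot =>
    Finsupp.mem_support_iff.1 hi ((Submodule.mem_bot R).1 (hbot ▸ hfi))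
  obtain ⟨g, ⟨hgM, hgs⟩, hgi⟩ : (1 : R) ∈ I :=
    ((hσ I hI).resolve_left hI_ne_bot) ▸ Submodule.mem_top
  replace hgs : (g.support : Set ι) ⊆ s := (Finsupp.mem_supported R g).1 hgs
  simp only [Finsupp.lapply_apply] at hgi
  have hσg : g.mapRange σ (map_zero σ) - g = 0 := by
    refine ih (s.erase i) (Finset.erase_ssubset (hfs hi)) _ (M.sub_mem (hM g hgM) hgM) ?_
    intro j hj
    have hj' : σ (g j) ≠ g j := by simpa [sub_eq_zero] using hj
    refine Finset.mem_erase.2 ⟨?_, hgs (Finsupp.mem_support_iff.2 ?_)⟩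
    · rintro rfl; exact hj' (by rw [hgi, map_one])
    · intro h0; exact hj' (by rw [h0, map_zero])
  have hg0 : g = 0 := hfix g hgM fun j => by
    simpa [sub_eq_zero] using congrArg (· j) hσg
  have h10 : (1 : R) = 0 := by rw [← hgi, hg0, Finsupp.zero_apply]
  exact Finsupp.mem_support_iff.1 hi (by rw [← mul_one (f i), h10, mul_zero])

end

theorem _root_.Module.Basis.exists_one_tmul_eq_of_baseChange_repr_mem_range {C R V ι : Type*}
    [CommSemiring C] [Semiring R] [Algebra C R] [AddCommMonoid V] [Module C V]
    (b : Module.Basis ι C V) (x : R ⊗[C] V)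
    (hx : ∀ i, (b.baseChange R).repr x i ∈ Set.range (algebraMap C R)) :
    ∃ v : V, (1 : R) ⊗ₜ[C] v = x := by
  classical
  choose c hc using hx
  rw [← (b.baseChange R).linearCombination_repr x, Finsupp.linearCombination_apply,
    Finsupp.sum]
  refine ⟨∑ i ∈ ((b.baseChange R).repr x).support, c i • b i, ?_⟩
  rw [TensorProduct.tmul_sum]
  refine Finset.sum_congr rfl fun i _ => ?_
  rw [Module.Basis.baseChange_apply, ← hc i, algebraMap_smul, TensorProduct.tmul_smul]

section

variable {C R : Type*} [Field C] [CommRing R] [Algebra C R] {σ : R ≃ₐ[C] R}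

theorem IsSimpleDiff.tensorProduct_eq_bot {V : Type*} [AddCommGroup V] [Module C V]
    (hσ : IsSimpleDiff (σ : R ≃+* R)) (hconst : ∀ r : R, σ r = r → r ∈ Set.range (algebraMap C R))
    {M : Submodule R (R ⊗[C] V)} (hM : ∀ x ∈ M, σ.toLinearMap.rTensor V x ∈ M)
    (hM_one_tmul : ∀ v : V, (1 : R) ⊗ₜ[C] v ∈ M → v = 0) : M = ⊥ := by
  let ℬ := (Module.Basis.ofVectorSpace C V).baseChange R
  have repr_rTensor (x : R ⊗[C] V) :
      ℬ.repr (σ.toLinearMap.rTensor V x) = (ℬ.repr x).mapRange σ (map_zero σ) := by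
    induction x using TensorProduct.induction_on with
    | zero => simp
    | tmul r v =>
      ext i
      simp [ℬ, Module.Basis.baseChange_repr_tmul]
    | add x y hx hy => ext i; simp_all
  suffices M.map ℬ.repr.toLinearMap = ⊥ by
    rwa [Submodule.map_eq_bot_iff] at this
  refine hσ.finsupp_eq_bot ?_ ?_
  · rintro _ ⟨x, hx, rfl⟩
    exact ⟨_, hM x hx, repr_rTensor x⟩
  · rintro _ ⟨x, hx, rfl⟩ hfix
    obtain ⟨v, rfl⟩ := (Module.Basis.ofVectorSpace C V)
      |>.exists_one_tmul_eq_of_baseChange_repr_mem_range x fun i => hconst _ (hfix i)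
    simp [hM_one_tmul v hx]

theorem IsSimpleDiff.ideal_eq_span_one_tmul {B : Type*} [CommRing B] [Algebra C B]
    (hσ : IsSimpleDiff (σ : R ≃+* R)) (hconst : ∀ r : R, σ r = r → r ∈ Set.range (algebraMap C R))
    {N : Ideal (R ⊗[C] B)} (hN : ∀ x ∈ N, σ.toLinearMap.rTensor B x ∈ N) :
    N = Ideal.span {x | x ∈ N ∧ ∃ b : B, x = (1 : R) ⊗ₜ[C] b} := by
  set S := Ideal.span {x | x ∈ N ∧ ∃ b : B, x = (1 : R) ⊗ₜ[C] b}
  have hSN : S ≤ N := Ideal.span_le.2 fun x hx => hx.1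
  let J : Submodule C B :=
    (N.comap (Algebra.TensorProduct.includeRight : B →ₐ[C] R ⊗[C] B)).restrictScalars C
  have range_le : LinearMap.range (J.subtype.lTensor R) ≤ S.restrictScalars C := by
    rintro _ ⟨y, rfl⟩
    induction y using TensorProduct.induction_on with
    | zero => simp
    | tmul r b =>
      have : r ⊗ₜ[C] (b : B) = (r ⊗ₜ[C] (1 : B)) * ((1 : R) ⊗ₜ[C] (b : B)) := by
        rw [Algebra.TensorProduct.tmul_mul_tmul, mul_one, one_mul]
      rw [LinearMap.lTensor_tmul, Submodule.restrictScalars_mem, J.subtype_apply, this]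
      exact S.mul_mem_left _ (Ideal.subset_span ⟨b.2, b, rfl⟩)
    | add y z hy hz => rw [map_add]; exact S.add_mem hy hz
  let π := J.mkQ.baseChange R
  have hπ : ∀ x, π x = 0 → x ∈ S := fun x hx =>
    range_le <| (lTensor_mkQ R J).le <| LinearMap.mem_ker.2 <| by
      rwa [← LinearMap.baseChange_eq_ltensor]
  suffices (N.restrictScalars R).map π = ⊥ from
    le_antisymm (fun x hx => hπ x ((Submodule.eq_bot_iff _).1 this (π x) ⟨x, hx, rfl⟩)) hSN
  refine hσ.tensorProduct_eq_bot hconst ?_ ?_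
  · rintro _ ⟨x, hx, rfl⟩
    refine ⟨_, hN x hx, ?_⟩
    change J.mkQ.lTensor R _ = σ.toLinearMap.rTensor _ (J.mkQ.lTensor R x)
    rw [← LinearMap.comp_apply, ← LinearMap.comp_apply, LinearMap.lTensor_comp_rTensor,
      LinearMap.rTensor_comp_lTensor]
  · rintro v ⟨x, hx, hxv⟩
    obtain ⟨b, rfl⟩ := J.mkQ_surjective v
    have hxb : x - (1 : R) ⊗ₜ[C] b ∈ S := hπ _ (by simpa [π, sub_eq_zero] using hxv)
    have hb : (1 : R) ⊗ₜ[C] b ∈ N := by simpa using N.sub_mem hx (hSN hxb)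
    exact (Submodule.Quotient.mk_eq_zero J).2 hb

end

theorem statement_5_general {k : Type} [Field k] (σk : k ≃+* k)
    {C : Type} [Field C] [Algebra C k]
    (hC : ∀ x : k, σk x = x ↔ x ∈ (algebraMap C k).range)
    {n : ℕ} (A : (Matrix (Fin n) (Fin n) k)ˣ)
    {R : Type} [CommRing R] [Algebra k R] (σR : R ≃+* R)
    (hPV : IsPVRing σk σR A) (hconst : ConstantsMatch σk σR)
    [Algebra C R] [IsScalarTower C k R]
    {B : Type} [CommRing B] [Algebra C B]
    (σT : R ⊗[C] B ≃+* R ⊗[C] B)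
    (hσT : ∀ (r : R) (b : B), σT (r ⊗ₜ[C] b) = σR r ⊗ₜ[C] b)
    (N : Ideal (R ⊗[C] B)) (hN : ∀ x ∈ N, σT x ∈ N) :
    N = Ideal.span {x | x ∈ N ∧ ∃ b : B, x = (1 : R) ⊗ₜ[C] b} := by
  obtain ⟨hcompat, hsimple, -⟩ := hPV
  have hfix (c : C) : σR (algebraMap C R c) = algebraMap C R c := by
    rw [IsScalarTower.algebraMap_apply C k R, hcompat, (hC _).2 ⟨c, rfl⟩]
  have hconstC (r : R) (hr : σR r = r) : r ∈ Set.range (algebraMap C R) := by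
    obtain ⟨c, hc, rfl⟩ := hconst r hr
    obtain ⟨d, rfl⟩ := (hC c).1 hc
    exact ⟨d, IsScalarTower.algebraMap_apply C k R d⟩
  let σ : R ≃ₐ[C] R := AlgEquiv.ofRingEquiv hfix
  have hσT_eq (x : R ⊗[C] B) : σT x = σ.toLinearMap.rTensor B x := by
    induction x using TensorProduct.induction_on with
    | zero => simp
    | tmul r b => exact hσT r b
    | add x y hx hy => rw [map_add, map_add, hx, hy]
  exact IsSimpleDiff.ideal_eq_span_one_tmul hsimple hconstC fun x hx => hσT_eq x ▸ hN x hx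

/-- (van der Put–Singer Lemma 1.11) Every σ-invariant ideal of `R ⊗_{C_k} B`
(with `σ = σ_R ⊗ id`) is generated by its intersection with `1 ⊗ B`. -/
theorem statement_5 {k : Type} [Field k] [CharZero k] (σk : k ≃+* k)
    {C : Type} [Field C] [Algebra C k]
    (hC : ∀ x : k, σk x = x ↔ x ∈ (algebraMap C k).range)
    {n : ℕ} (A : (Matrix (Fin n) (Fin n) k)ˣ)
    {R : Type} [CommRing R] [Algebra k R] (σR : R ≃+* R)
    (hPV : IsPVRing σk σR A) (hconst : ConstantsMatch σk σR)
    [Algebra C R] [IsScalarTower C k R]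
    {B : Type} [CommRing B] [Algebra C B]
    (σT : R ⊗[C] B ≃+* R ⊗[C] B)
    (hσT : ∀ (r : R) (b : B), σT (r ⊗ₜ[C] b) = σR r ⊗ₜ[C] b)
    (N : Ideal (R ⊗[C] B)) (hN : ∀ x ∈ N, σT x ∈ N) :
    N = Ideal.span {x | x ∈ N ∧ ∃ b : B, x = (1 : R) ⊗ₜ[C] b} :=
  statement_5_general σk hC A σR hPV hconst σT hσT N hN

end PV
end
end

section
/- Let L be a difference field of characteristic zero with constants C_L, let Y = (Y_{ij}) be an n×n matrix of indeterminates, and extend σ to L[Y, 1/det(Y)] by σ(Y_{ij}) = Y_{ij}. Then the map I ↦ I·L[Y, 1/det(Y)] is a bijection from the set of ideals of C_L[Y, 1/det(Y)] onto the set of σ-invariant ideals of L[Y, 1/det(Y)]. Concretely: (i) for every ideal I of C_L[Y, 1/det(Y)] one has (I·L[Y, 1/det(Y)]) ∩ C_L[Y, 1/det(Y)] = I, and (ii) every σ-invariant ideal J of L[Y, 1/det(Y)] is generated, as an ideal, by J ∩ C_L[Y, 1/det(Y)]. -/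
open scoped TensorProduct

noncomputable section

namespace PV

set_option synthInstance.maxHeartbeats 1000000

/-!
Write `P = L[Y]`, with `σ` acting on coefficients; `L[Y, 1/det Y]` is the localization of `P` at
the fixed element `det Y`, and `C_L[Y, 1/det Y]` consists of the fractions `q / det Y ^ k` with
`q ∈ C_L[Y]`.

(i) A `C_L`-linear retraction `L → C_L`, applied to coefficients, is a `C_L[Y]`-linear retraction
of `P` onto `C_L[Y]`; clearing denominators turns it into a `C_L[Y, 1/det Y]`-linear retraction of
`L[Y, 1/det Y]` onto `C_L[Y, 1/det Y]`, and an ideal extended along a ring map with such a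
retraction contracts back to itself.

(ii) A `σ`-stable `L`-subspace `V` of `P` is spanned by its fixed elements: a nonzero `w ∈ V` of
minimal support with some coefficient equal to `1` is fixed, because `σ w - w ∈ V` has smaller
support; subtracting a multiple of `w` lowers the support, so induction on its size applies.
Applied to the preimage in `P` of a `σ`-invariant ideal `J`, this shows that `J` is generated by
fixed elements.
-/

open MvPolynomial

section Descent

variable {K : Type*} [Field K] (τ : K ≃+* K) {ι : Type*}

lemma mem_constants_mapEquiv {q : MvPolynomial ι K} :
    q ∈ constants (mapEquiv ι τ) ↔ map (τ : K →+* K) q = q :=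
  Iff.rfl

lemma support_map_sub_subset_erase [DecidableEq ι] {w : MvPolynomial ι K} {α : ι →₀ ℕ}
    (hw : coeff α w = 1) :
    (map (τ : K →+* K) w - w).support ⊆ w.support.erase α := by
  intro m hm
  rw [mem_support_iff, coeff_sub, coeff_map] at hm
  refine Finset.mem_erase.mpr ⟨?_, mem_support_iff.mpr ?_⟩
  · rintro rfl
    simp [hw] at hm
  · intro h
    simp [h] at hm

lemma support_sub_coeff_smul_subset_erase [DecidableEq ι] {p w : MvPolynomial ι K}
    {α : ι →₀ ℕ} (hw : coeff α w = 1) (hwp : w.support ⊆ p.support) :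
    (p - coeff α p • w).support ⊆ p.support.erase α := by
  intro m hm
  rw [mem_support_iff, coeff_sub, coeff_smul, smul_eq_mul] at hm
  refine Finset.mem_erase.mpr ⟨?_, mem_support_iff.mpr ?_⟩
  · rintro rfl
    simp [hw] at hm
  · intro h
    have : coeff m w = 0 := notMem_support_iff.mp fun hmw => mem_support_iff.mp (hwp hmw) h
    simp [h, this] at hm

variable {V : Submodule K (MvPolynomial ι K)}

lemma map_inv_coeff_smul_eq_self (hV : ∀ p ∈ V, map (τ : K →+* K) p ∈ V)
    {q : MvPolynomial ι K} (hq : q ∈ V)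
    (hmin : ∀ r ∈ V, r ≠ 0 → r.support ⊆ q.support → q.support.card ≤ r.support.card)
    {α : ι →₀ ℕ} (hα : α ∈ q.support) :
    map (τ : K →+* K) ((coeff α q)⁻¹ • q) = (coeff α q)⁻¹ • q := by
  have hqα : coeff α q ≠ 0 := mem_support_iff.mp hα
  set w := (coeff α q)⁻¹ • q
  have hwV : w ∈ V := V.smul_mem _ hq
  have hw : coeff α w = 1 := by simp [w, inv_mul_cancel₀ hqα]
  have hsupp : w.support = q.support := support_smul_eq (inv_ne_zero hqα) q
  by_contra hne
  classical
  have hsub := support_map_sub_subset_erase τ hw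
  rw [hsupp] at hsub
  have hcard := hmin _ (V.sub_mem (hV w hwV) hwV) (sub_ne_zero.mpr hne)
    (hsub.trans (Finset.erase_subset _ _))
  have hlt := (Finset.card_le_card hsub).trans_lt (Finset.card_erase_lt_of_mem hα)
  omega

theorem mem_span_constants_of_mem (hV : ∀ p ∈ V, map (τ : K →+* K) p ∈ V)
    {p : MvPolynomial ι K} (hp : p ∈ V) :
    p ∈ Submodule.span K ((V : Set (MvPolynomial ι K)) ∩ constants (mapEquiv ι τ)) := by
  classical
  induction h : p.support.card using Nat.strong_induction_on generalizing p with
  | _ N ih =>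
  obtain rfl | hp0 := eq_or_ne p 0
  · exact Submodule.zero_mem _
  obtain ⟨q, ⟨hqV, hq0, hqp⟩, hmin⟩ :=
    (measure fun r : MvPolynomial ι K => r.support.card).wf.has_min
      {r | r ∈ V ∧ r ≠ 0 ∧ r.support ⊆ p.support} ⟨p, hp, hp0, subset_rfl⟩
  obtain ⟨α, hα⟩ := support_nonempty.mpr hq0
  set w := (coeff α q)⁻¹ • q
  have hwV : w ∈ V := V.smul_mem _ hqV
  have hwfix : map (τ : K →+* K) w = w :=
    map_inv_coeff_smul_eq_self τ hV hqV
      (fun r hr hr0 hrq => not_lt.mp (hmin r ⟨hr, hr0, hrq.trans hqp⟩)) hα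
  have hw : coeff α w = 1 := by simp [w, inv_mul_cancel₀ (mem_support_iff.mp hα)]
  have hwp : w.support ⊆ p.support := support_smul.trans hqp
  have hsub := support_sub_coeff_smul_subset_erase hw hwp
  have hlt : (p - coeff α p • w).support.card < N :=
    h ▸ (Finset.card_le_card hsub).trans_lt (Finset.card_erase_lt_of_mem (hqp hα))
  have hrest := ih _ hlt (V.sub_mem hp (V.smul_mem _ hwV)) rfl
  rw [← sub_add_cancel p (coeff α p • w)]
  exact add_mem hrest (Submodule.smul_mem _ _ (Submodule.subset_span ⟨hwV, hwfix⟩))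

end Descent

section Retraction

variable {K : Type*} [Field K] (τ : K ≃+* K) {ι : Type*}

lemma coeff_mem_constantsF {q : MvPolynomial ι K} (hq : q ∈ constants (mapEquiv ι τ))
    (m : ι →₀ ℕ) : coeff m q ∈ constantsF τ := by
  have h := congrArg (coeff m) ((mem_constants_mapEquiv τ).mp hq)
  rwa [coeff_map] at h

def constantsRetraction : K →ₗ[constantsF τ] constantsF τ :=
  Classical.choose <| (Algebra.linearMap (constantsF τ) K).exists_leftInverse_of_injective
    (LinearMap.ker_eq_bot.mpr (FaithfulSMul.algebraMap_injective _ _))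

lemma constantsRetraction_coe (c : constantsF τ) : constantsRetraction τ c = c :=
  LinearMap.congr_fun (Classical.choose_spec <|
    (Algebra.linearMap (constantsF τ) K).exists_leftInverse_of_injective
      (LinearMap.ker_eq_bot.mpr (FaithfulSMul.algebraMap_injective _ _))) c

def coeffRetraction (p : MvPolynomial ι K) : MvPolynomial ι K :=
  ∑ m ∈ p.support, monomial m (constantsRetraction τ (coeff m p) : K)

lemma coeff_coeffRetraction (p : MvPolynomial ι K) (m : ι →₀ ℕ) :
    coeff m (coeffRetraction τ p) = constantsRetraction τ (coeff m p) := by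
  classical
  rw [coeffRetraction, coeff_sum, Finset.sum_eq_single m]
  · simp
  · intro b _ hb
    simp [coeff_monomial, hb]
  · intro hm
    simp [notMem_support_iff.mp hm]

lemma coeffRetraction_mem (p : MvPolynomial ι K) :
    coeffRetraction τ p ∈ constants (mapEquiv ι τ) := by
  rw [mem_constants_mapEquiv]
  ext m
  rw [coeff_map, coeff_coeffRetraction]
  exact (constantsRetraction τ (coeff m p)).2

lemma coeffRetraction_add (p q : MvPolynomial ι K) :
    coeffRetraction τ (p + q) = coeffRetraction τ p + coeffRetraction τ q := by
  ext m
  simp [coeff_coeffRetraction]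

lemma coeffRetraction_mul_of_mem (p : MvPolynomial ι K) {u : MvPolynomial ι K}
    (hu : u ∈ constants (mapEquiv ι τ)) :
    coeffRetraction τ (p * u) = coeffRetraction τ p * u := by
  classical
  ext m
  simp only [coeff_coeffRetraction, coeff_mul]
  have hsmul : ∀ x : (ι →₀ ℕ) × (ι →₀ ℕ), coeff x.1 p * coeff x.2 u
      = (⟨coeff x.2 u, coeff_mem_constantsF τ hu x.2⟩ : constantsF τ) • coeff x.1 p :=
    fun x => mul_comm _ _
  simp only [hsmul, map_sum, map_smul]
  push_cast
  exact Finset.sum_congr rfl fun x _ => mul_comm _ _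

lemma coeffRetraction_of_mem {u : MvPolynomial ι K} (hu : u ∈ constants (mapEquiv ι τ)) :
    coeffRetraction τ u = u := by
  ext m
  rw [coeff_coeffRetraction]
  exact congrArg Subtype.val (constantsRetraction_coe τ ⟨_, coeff_mem_constantsF τ hu m⟩)

end Retraction

theorem Ideal.comap_map_eq_self_of_retraction {S R : Type*} [CommRing S] [CommRing R]
    (f : S →+* R) (g : R →+ S) (hg : ∀ r s, g (r * f s) = g r * s) (hgf : ∀ s, g (f s) = s)
    (I : Ideal S) : (I.map f).comap f = I := by
  refine le_antisymm (fun x hx => ?_) Ideal.le_comap_map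
  have key : ∀ y ∈ I.map f, ∀ r, g (r * y) ∈ I := by
    intro y hy
    refine Submodule.span_induction ?_ ?_ ?_ ?_ hy
    · rintro _ ⟨s, hs, rfl⟩ r
      rw [hg]
      exact I.mul_mem_left _ hs
    · simp
    · intro a b _ _ ha hb r
      rw [mul_add, map_add]
      exact I.add_mem (ha r) (hb r)
    · intro a b _ hb r
      rw [smul_eq_mul, ← mul_assoc]
      exact hb _
  simpa [hgf] using key _ hx 1

section GenRing

variable {L : Type*} [Field L] (σL : L ≃+* L) {n : ℕ}

local notation "φ" => algebraMap (MvPolynomial (Fin n × Fin n) L) (GenRing L n)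
local notation "Δ" => Matrix.det (genMat L n)

lemma det_genMat_ne_zero : Δ ≠ 0 :=
  Matrix.det_mvPolynomialX_ne_zero (Fin n) L

lemma algebraMap_genRing_injective : Function.Injective φ :=
  IsLocalization.injective _ (powers_le_nonZeroDivisors_of_noZeroDivisors det_genMat_ne_zero)

lemma map_det_genMat : map (σL : L →+* L) Δ = Δ := by
  rw [RingHom.map_det]
  congr 1
  ext i j
  simp [genMat]

lemma powers_det_le_constants :
    Submonoid.powers Δ ≤ (constants (mapEquiv (Fin n × Fin n) σL)).toSubmonoid :=
  Submonoid.powers_le.mpr (map_det_genMat σL)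

lemma exists_mk'_one_eq_invDet_pow {t : Submonoid.powers Δ} :
    ∃ k : ℕ, IsLocalization.mk' (GenRing L n) 1 t = invDet L n ^ k := by
  obtain ⟨k, hk⟩ := t.2
  refine ⟨k, IsLocalization.mk'_eq_iff_eq_mul.mpr ?_⟩
  rw [map_one, ← hk, map_pow, ← mul_pow, invDet, mul_comm, IsLocalization.Away.mul_invSelf,
    one_pow]

lemma genRing_map_algebraMap (σt : GenRing L n ≃+* GenRing L n)
    (hcompat : ∀ x : L, σt (algebraMap L (GenRing L n) x) = algebraMap L (GenRing L n) (σL x))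
    (hY : ∀ i j, σt (Yent L n i j) = Yent L n i j) (p : MvPolynomial (Fin n × Fin n) L) :
    σt (φ p) = φ (map (σL : L →+* L) p) := by
  refine RingHom.congr_fun (ringHom_ext (f := (σt : GenRing L n →+* GenRing L n).comp φ)
    (g := (φ).comp (map (σL : L →+* L))) (fun c => ?_) (fun ij => ?_)) p
  · show σt (φ (C c)) = φ (map _ (C c))
    rw [map_C, ← algebraMap_eq, ← IsScalarTower.algebraMap_apply,
      ← IsScalarTower.algebraMap_apply, hcompat]
    rfl
  · show σt (φ (X ij)) = φ (map _ (X ij))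
    rw [map_X]
    exact hY ij.1 ij.2

variable (n) in
/-- `C_L[Y, 1/det Y]` -/
def constantsGenRing : Subring (GenRing L n) :=
  Subring.closure ((⇑(algebraMap L (GenRing L n)) '' {x : L | σL x = x}) ∪
    (Set.range fun p : Fin n × Fin n => Yent L n p.1 p.2) ∪ {invDet L n})

lemma invDet_mem_constantsGenRing : invDet L n ∈ constantsGenRing σL n :=
  Subring.subset_closure (Or.inr rfl)

lemma algebraMap_mem_constantsGenRing_of_eq {c : L} (hc : σL c = c) :
    algebraMap L (GenRing L n) c ∈ constantsGenRing σL n :=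
  Subring.subset_closure (Or.inl (Or.inl ⟨c, hc, rfl⟩))

lemma Yent_mem_constantsGenRing (i j : Fin n) : Yent L n i j ∈ constantsGenRing σL n :=
  Subring.subset_closure (Or.inl (Or.inr ⟨(i, j), rfl⟩))

lemma algebraMap_mem_constantsGenRing {q : MvPolynomial (Fin n × Fin n) L}
    (hq : q ∈ constants (mapEquiv _ σL)) : φ q ∈ constantsGenRing σL n := by
  rw [as_sum q, map_sum]
  refine sum_mem fun v _ => ?_
  rw [monomial_eq, map_mul, ← algebraMap_eq, ← IsScalarTower.algebraMap_apply, Finsupp.prod,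
    map_prod]
  refine mul_mem (algebraMap_mem_constantsGenRing_of_eq σL (coeff_mem_constantsF σL hq v))
    (prod_mem fun ij _ => ?_)
  rw [map_pow]
  exact pow_mem (Yent_mem_constantsGenRing σL ij.1 ij.2) _

lemma mk'_mem_constantsGenRing {q : MvPolynomial (Fin n × Fin n) L}
    (hq : q ∈ constants (mapEquiv _ σL)) (t : Submonoid.powers Δ) :
    IsLocalization.mk' (GenRing L n) q t ∈ constantsGenRing σL n := by
  obtain ⟨k, hk⟩ := exists_mk'_one_eq_invDet_pow (t := t)
  rw [IsLocalization.mk'_eq_mul_mk'_one, hk]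
  exact mul_mem (algebraMap_mem_constantsGenRing σL hq)
    (pow_mem (invDet_mem_constantsGenRing σL) _)

lemma exists_mk'_eq_of_mem_constantsGenRing {s : GenRing L n}
    (hs : s ∈ constantsGenRing σL n) :
    ∃ q ∈ constants (mapEquiv _ σL), ∃ t : Submonoid.powers Δ,
      IsLocalization.mk' (GenRing L n) q t = s := by
  have hpow := powers_det_le_constants (n := n) σL
  induction hs using Subring.closure_induction with
  | mem x hx =>
    rcases hx with (⟨c, hc, rfl⟩ | ⟨ij, rfl⟩) | rfl
    · refine ⟨C c, ?_, 1, ?_⟩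
      · rw [mem_constants_mapEquiv, map_C]
        exact congrArg C hc
      · rw [IsLocalization.mk'_one, ← algebraMap_eq, ← IsScalarTower.algebraMap_apply]
    · exact ⟨X ij, by rw [mem_constants_mapEquiv, map_X], 1, IsLocalization.mk'_one _ _⟩
    · exact ⟨1, one_mem _, ⟨_, Submonoid.mem_powers _⟩, rfl⟩
  | zero => exact ⟨0, zero_mem _, 1, IsLocalization.mk'_zero _⟩
  | one => exact ⟨1, one_mem _, 1, by rw [IsLocalization.mk'_one, map_one]⟩
  | add x y _ _ hx hy =>
    obtain ⟨q, hq, t, rfl⟩ := hx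
    obtain ⟨q', hq', t', rfl⟩ := hy
    exact ⟨_, add_mem (mul_mem hq (hpow t'.2)) (mul_mem hq' (hpow t.2)), _,
      IsLocalization.mk'_add _ _ _ _⟩
  | neg x _ hx =>
    obtain ⟨q, hq, t, rfl⟩ := hx
    exact ⟨-q, neg_mem hq, t, IsLocalization.mk'_neg _ _ _⟩
  | mul x y _ _ hx hy =>
    obtain ⟨q, hq, t, rfl⟩ := hx
    obtain ⟨q', hq', t', rfl⟩ := hy
    exact ⟨_, mul_mem hq hq', _, IsLocalization.mk'_mul _ _ _ _ _⟩

lemma eq_self_of_mem_constantsGenRing (σt : GenRing L n ≃+* GenRing L n)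
    (hcompat : ∀ x : L, σt (algebraMap L (GenRing L n) x) = algebraMap L (GenRing L n) (σL x))
    (hY : ∀ i j, σt (Yent L n i j) = Yent L n i j) {s : GenRing L n}
    (hs : s ∈ constantsGenRing σL n) : σt s = s := by
  obtain ⟨q, hq, t, rfl⟩ := exists_mk'_eq_of_mem_constantsGenRing σL hs
  have hfix : ∀ u ∈ constants (mapEquiv _ σL), σt (φ u) = φ u := fun u hu => by
    rw [genRing_map_algebraMap σL σt hcompat hY, (mem_constants_mapEquiv σL).mp hu]
  rw [IsLocalization.eq_mk'_iff_mul_eq, ← hfix _ (powers_det_le_constants σL t.2), ← map_mul,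
    IsLocalization.mk'_spec, hfix _ hq]

/-- Independent of the chosen representative `y = p / t`, by `genRetraction_mul_algebraMap`. -/
def genRetraction (y : GenRing L n) : GenRing L n :=
  let x := (IsLocalization.surj (Submonoid.powers Δ) y).choose
  IsLocalization.mk' (GenRing L n) (coeffRetraction σL x.1) x.2

lemma genRetraction_mem (y : GenRing L n) : genRetraction σL y ∈ constantsGenRing σL n :=
  mk'_mem_constantsGenRing σL (coeffRetraction_mem σL _) _

lemma genRetraction_mul_algebraMap {y : GenRing L n} {p : MvPolynomial (Fin n × Fin n) L}
    {t : Submonoid.powers Δ} (h : y * φ t = φ p) :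
    genRetraction σL y * φ t = φ (coeffRetraction σL p) := by
  have hx := (IsLocalization.surj (Submonoid.powers Δ) y).choose_spec
  set x := (IsLocalization.surj (Submonoid.powers Δ) y).choose
  have hcross : x.1 * t = p * x.2 :=
    algebraMap_genRing_injective (by rw [map_mul, map_mul, ← hx, ← h]; ring)
  have hfix := powers_det_le_constants (n := n) σL
  have hρ : coeffRetraction σL x.1 * t = coeffRetraction σL p * x.2 := by
    rw [← coeffRetraction_mul_of_mem σL _ (hfix t.2), hcross,
      coeffRetraction_mul_of_mem σL _ (hfix x.2.2)]
  rw [genRetraction, mul_comm, IsLocalization.mul_mk'_eq_mk'_of_mul, mul_comm, hρ,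
    IsLocalization.mk'_mul_cancel_right]

lemma eq_of_mul_algebraMap_powers_eq {a b : GenRing L n} (t : Submonoid.powers Δ)
    (h : a * φ t = b * φ t) : a = b :=
  (IsLocalization.map_units (GenRing L n) t).mul_left_inj.mp h

lemma genRetraction_add (y y' : GenRing L n) :
    genRetraction σL (y + y') = genRetraction σL y + genRetraction σL y' := by
  obtain ⟨⟨p, t⟩, h : y * φ t = φ p⟩ := IsLocalization.surj (Submonoid.powers Δ) y
  obtain ⟨⟨p', t'⟩, h' : y' * φ t' = φ p'⟩ := IsLocalization.surj (Submonoid.powers Δ) y'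
  have hfix := powers_det_le_constants (n := n) σL
  refine eq_of_mul_algebraMap_powers_eq (t * t') ?_
  rw [genRetraction_mul_algebraMap σL
      (p := p * (t' : MvPolynomial _ L) + p' * (t : MvPolynomial _ L))
      (by simp only [Submonoid.coe_mul, map_add, map_mul, ← h, ← h']; ring),
    coeffRetraction_add, coeffRetraction_mul_of_mem σL _ (hfix t'.2),
    coeffRetraction_mul_of_mem σL _ (hfix t.2), map_add, map_mul, map_mul,
    ← genRetraction_mul_algebraMap σL h, ← genRetraction_mul_algebraMap σL h',
    Submonoid.coe_mul, map_mul]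
  ring

lemma genRetraction_mul_of_mem (y : GenRing L n) {s : GenRing L n}
    (hs : s ∈ constantsGenRing σL n) :
    genRetraction σL (y * s) = genRetraction σL y * s := by
  obtain ⟨⟨p, t⟩, h : y * φ t = φ p⟩ := IsLocalization.surj (Submonoid.powers Δ) y
  obtain ⟨q, hq, t', rfl⟩ := exists_mk'_eq_of_mem_constantsGenRing σL hs
  have hs' := IsLocalization.mk'_spec (GenRing L n) q t'
  refine eq_of_mul_algebraMap_powers_eq (t * t') ?_
  rw [genRetraction_mul_algebraMap σL (p := p * q)
      (by rw [Submonoid.coe_mul, map_mul, map_mul, ← h, ← hs']; ring),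
    coeffRetraction_mul_of_mem σL _ hq, map_mul, ← genRetraction_mul_algebraMap σL h, ← hs',
    Submonoid.coe_mul, map_mul]
  ring

lemma genRetraction_of_mem {s : GenRing L n} (hs : s ∈ constantsGenRing σL n) :
    genRetraction σL s = s := by
  obtain ⟨q, hq, t, rfl⟩ := exists_mk'_eq_of_mem_constantsGenRing σL hs
  refine eq_of_mul_algebraMap_powers_eq t ?_
  rw [genRetraction_mul_algebraMap σL (IsLocalization.mk'_spec _ q t),
    coeffRetraction_of_mem σL hq, IsLocalization.mk'_spec]

theorem comap_map_constantsGenRing (I : Ideal (constantsGenRing σL n)) :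
    (I.map (constantsGenRing σL n).subtype).comap (constantsGenRing σL n).subtype = I :=
  Ideal.comap_map_eq_self_of_retraction _
    (AddMonoidHom.mk' (fun y => ⟨genRetraction σL y, genRetraction_mem σL y⟩)
      fun a b => Subtype.ext (genRetraction_add σL a b))
    (fun r s => Subtype.ext (genRetraction_mul_of_mem σL r s.2))
    (fun s => Subtype.ext (genRetraction_of_mem σL s.2)) I

variable (σt : GenRing L n ≃+* GenRing L n)
  (hcompat : ∀ x : L, σt (algebraMap L (GenRing L n) x) = algebraMap L (GenRing L n) (σL x))
  (hY : ∀ i j, σt (Yent L n i j) = Yent L n i j)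
include hcompat hY

theorem map_constantsGenRing_invariant (I : Ideal (constantsGenRing σL n)) :
    ∀ x ∈ I.map (constantsGenRing σL n).subtype,
      σt x ∈ I.map (constantsGenRing σL n).subtype := by
  have h : I.map (constantsGenRing σL n).subtype ≤
      (I.map (constantsGenRing σL n).subtype).comap σt :=
    Ideal.map_le_iff_le_comap.mpr fun a ha => by
      rw [Ideal.mem_comap, Ideal.mem_comap, (constantsGenRing σL n).subtype_apply,
        eq_self_of_mem_constantsGenRing σL σt hcompat hY a.2]
      exact Ideal.mem_map_of_mem _ ha
  exact fun x hx => h hx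

theorem eq_map_comap_constantsGenRing (J : Ideal (GenRing L n)) (hJ : ∀ x ∈ J, σt x ∈ J) :
    J = (J.comap (constantsGenRing σL n).subtype).map (constantsGenRing σL n).subtype := by
  set J₀ := (J.comap (constantsGenRing σL n).subtype).map (constantsGenRing σL n).subtype
  refine le_antisymm (fun x hx => ?_) Ideal.map_comap_le
  obtain ⟨⟨p, t⟩, hpt⟩ := IsLocalization.surj (Submonoid.powers Δ) x
  let V : Submodule L (MvPolynomial (Fin n × Fin n) L) := (J.comap φ).restrictScalars L
  have hV : ∀ q ∈ V, map (σL : L →+* L) q ∈ V := fun q hq => by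
    rw [Submodule.restrictScalars_mem, Ideal.mem_comap,
      ← genRing_map_algebraMap σL σt hcompat hY]
    exact hJ _ hq
  have hpV : p ∈ V := show φ p ∈ J from hpt ▸ J.mul_mem_right _ hx
  have hspan : Submodule.span L ((V : Set _) ∩ constants (mapEquiv (Fin n × Fin n) σL)) ≤
      (J₀.comap φ).restrictScalars L :=
    Submodule.span_le.mpr <| by
      rintro q ⟨hqV, hq⟩
      have hq₀ : (⟨φ q, algebraMap_mem_constantsGenRing σL hq⟩ : constantsGenRing σL n) ∈
          J.comap (constantsGenRing σL n).subtype := hqV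
      exact Ideal.mem_map_of_mem _ hq₀
  rw [IsLocalization.eq_mk'_iff_mul_eq.mpr hpt, IsLocalization.mk'_eq_mul_mk'_one]
  exact J₀.mul_mem_right _ (hspan (mem_span_constants_of_mem σL hV hpV))

end GenRing

theorem statement_6_general {L : Type} [Field L] (σL : L ≃+* L) {n : ℕ}
    (σt : GenRing L n ≃+* GenRing L n)
    (hcompat : ∀ x : L, σt (algebraMap L (GenRing L n) x) = algebraMap L (GenRing L n) (σL x))
    (hY : ∀ i j, σt (Yent L n i j) = Yent L n i j)
    -- S₀ is the subring C_L[Y, 1/det Y]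
    (S₀ : Subring (GenRing L n))
    (hS₀ : S₀ = Subring.closure
      ((⇑(algebraMap L (GenRing L n)) '' {x : L | σL x = x}) ∪
        (Set.range fun p : Fin n × Fin n => Yent L n p.1 p.2) ∪ {invDet L n})) :
    -- extensions of ideals of S₀ are σ-invariant
    (∀ I : Ideal S₀, ∀ x ∈ Ideal.map S₀.subtype I, σt x ∈ Ideal.map S₀.subtype I) ∧
    -- (i): contraction of the extension gives back the ideal
    (∀ I : Ideal S₀, (Ideal.map S₀.subtype I).comap S₀.subtype = I) ∧
    -- (ii): every σ-invariant ideal is generated by its contraction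
    (∀ J : Ideal (GenRing L n), (∀ x ∈ J, σt x ∈ J) →
      J = Ideal.map S₀.subtype (J.comap S₀.subtype)) ∧
    -- bijectivity: every σ-invariant ideal is the extension of a unique ideal of S₀
    (∀ J : Ideal (GenRing L n), (∀ x ∈ J, σt x ∈ J) →
      ∃! I : Ideal S₀, Ideal.map S₀.subtype I = J) := by
  obtain rfl : S₀ = constantsGenRing σL n := hS₀
  refine ⟨map_constantsGenRing_invariant σL σt hcompat hY,
    comap_map_constantsGenRing σL, eq_map_comap_constantsGenRing σL σt hcompat hY,
    fun J hJ => ⟨_, (eq_map_comap_constantsGenRing σL σt hcompat hY J hJ).symm, ?_⟩⟩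
  rintro I rfl
  exact (comap_map_constantsGenRing σL I).symm

/-- For the difference ring `L[Y, 1/det Y]` with `σ(Y_{ij}) = Y_{ij}`, the map
`I ↦ I·L[Y, 1/det Y]` is a bijection from ideals of `C_L[Y, 1/det Y]` onto the σ-invariant
ideals of `L[Y, 1/det Y]`. -/
theorem statement_6 {L : Type} [Field L] [CharZero L] (σL : L ≃+* L) {n : ℕ}
    (σt : GenRing L n ≃+* GenRing L n)
    (hcompat : ∀ x : L, σt (algebraMap L (GenRing L n) x) = algebraMap L (GenRing L n) (σL x))
    (hY : ∀ i j, σt (Yent L n i j) = Yent L n i j)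
    -- S₀ is the subring C_L[Y, 1/det Y]
    (S₀ : Subring (GenRing L n))
    (hS₀ : S₀ = Subring.closure
      ((⇑(algebraMap L (GenRing L n)) '' {x : L | σL x = x}) ∪
        (Set.range fun p : Fin n × Fin n => Yent L n p.1 p.2) ∪ {invDet L n})) :
    -- extensions of ideals of S₀ are σ-invariant
    (∀ I : Ideal S₀, ∀ x ∈ Ideal.map S₀.subtype I, σt x ∈ Ideal.map S₀.subtype I) ∧
    -- (i): contraction of the extension gives back the ideal
    (∀ I : Ideal S₀, (Ideal.map S₀.subtype I).comap S₀.subtype = I) ∧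
    -- (ii): every σ-invariant ideal is generated by its contraction
    (∀ J : Ideal (GenRing L n), (∀ x ∈ J, σt x ∈ J) →
      J = Ideal.map S₀.subtype (J.comap S₀.subtype)) ∧
    -- bijectivity: every σ-invariant ideal is the extension of a unique ideal of S₀
    (∀ J : Ideal (GenRing L n), (∀ x ∈ J, σt x ∈ J) →
      ∃! I : Ideal S₀, Ideal.map S₀.subtype I = J) :=
  statement_6_general σL σt hcompat hY S₀ hS₀

end PV
end
end

section
/- Let K be a difference field of characteristic zero, A ∈ GL_n(K), R' a Picard-Vessiot ring for σ(X) = AX over K, and R* the total quotient ring of R' (the localization of R' at its set of nonzerodivisors), with σ extended canonically to R*. Then C_{R*} = C_{R'}: every element c of R* with σ(c) = c lies in (the canonical image of) R'. -/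
open scoped TensorProduct

noncomputable section

namespace PV

set_option synthInstance.maxHeartbeats 1000000

def denomIdeal (R : Type*) {S : Type*} [CommRing R] [CommRing S] [Algebra R S] (c : S) :
    Ideal R where
  carrier := {r | ∃ a : R, algebraMap R S a = algebraMap R S r * c}
  zero_mem' := ⟨0, by simp⟩
  add_mem' := by
    rintro x y ⟨a, ha⟩ ⟨b, hb⟩
    exact ⟨a + b, by rw [map_add, map_add, ha, hb, add_mul]⟩
  smul_mem' := by
    rintro r x ⟨a, ha⟩
    exact ⟨r * a, by rw [smul_eq_mul, map_mul, map_mul, ha, mul_assoc]⟩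

section DenomIdeal

variable {R S : Type*} [CommRing R] [CommRing S] [Algebra R S]

theorem mem_denomIdeal {c : S} {r : R} :
    r ∈ denomIdeal R c ↔ ∃ a : R, algebraMap R S a = algebraMap R S r * c :=
  Iff.rfl

theorem one_mem_denomIdeal {c : S} : (1 : R) ∈ denomIdeal R c ↔ ∃ a : R, algebraMap R S a = c := by
  simp only [mem_denomIdeal, map_one, one_mul]

theorem exists_mem_denomIdeal_of_isLocalization (M : Submonoid R) [IsLocalization M S] (c : S) :
    ∃ s ∈ M, s ∈ denomIdeal R c := by
  obtain ⟨⟨a, s⟩, hs⟩ := IsLocalization.surj M c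
  exact ⟨s, s.2, a, by rw [← hs, mul_comm]⟩

theorem map_mem_denomIdeal {σ : R ≃+* R} {σS : S ≃+* S}
    (hσS : ∀ x, σS (algebraMap R S x) = algebraMap R S (σ x)) {c : S} (hc : σS c = c)
    {r : R} (hr : r ∈ denomIdeal R c) : σ r ∈ denomIdeal R c := by
  obtain ⟨a, ha⟩ := hr
  refine ⟨σ a, ?_⟩
  simpa only [hσS, map_mul, hc] using congrArg σS ha

/-- The denominator ideal of a constant is `σ`-stable and contains a nonzerodivisor. -/
theorem IsSimpleDiff.denomIdeal_eq_top {σ : R ≃+* R} (hσ : IsSimpleDiff σ) {σS : S ≃+* S}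
    (hσS : ∀ x, σS (algebraMap R S x) = algebraMap R S (σ x))
    (M : Submonoid R) (hM : M ≤ nonZeroDivisors R) [IsLocalization M S]
    {c : S} (hc : σS c = c) : denomIdeal R c = ⊤ := by
  rcases subsingleton_or_nontrivial R with hR | hR
  · exact Subsingleton.elim _ _
  obtain ⟨s, hsM, hsI⟩ := exists_mem_denomIdeal_of_isLocalization M c
  have hne : denomIdeal R c ≠ ⊥ := fun h =>
    nonZeroDivisors.ne_zero (hM hsM) ((Submodule.mem_bot R).mp (h ▸ hsI))
  exact (hσ _ fun _ => map_mem_denomIdeal hσS hc).resolve_left hne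

theorem IsSimpleDiff.exists_constant_eq_of_isLocalization {σ : R ≃+* R} (hσ : IsSimpleDiff σ)
    {σS : S ≃+* S} (hσS : ∀ x, σS (algebraMap R S x) = algebraMap R S (σ x))
    (M : Submonoid R) (hM : M ≤ nonZeroDivisors R) [IsLocalization M S]
    {c : S} (hc : σS c = c) : ∃ r : R, σ r = r ∧ algebraMap R S r = c := by
  obtain ⟨a, ha⟩ := one_mem_denomIdeal.mp <|
    (Ideal.eq_top_iff_one _).mp (IsSimpleDiff.denomIdeal_eq_top hσ hσS M hM hc)
  refine ⟨a, IsLocalization.injective S hM ?_, ha⟩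
  rw [← hσS, ha, hc]

end DenomIdeal

theorem statement_16_general {K : Type} [Field K] (σK : K ≃+* K)
    {n : ℕ} (A : (Matrix (Fin n) (Fin n) K)ˣ)
    {R' : Type} [CommRing R'] [Algebra K R'] (σ' : R' ≃+* R')
    (hPV : IsPVRing σK σ' A)
    (σs : Localization (nonZeroDivisors R') ≃+* Localization (nonZeroDivisors R'))
    (hσs : ∀ x : R',
      σs (algebraMap R' (Localization (nonZeroDivisors R')) x) =
        algebraMap R' (Localization (nonZeroDivisors R')) (σ' x)) :
    ∀ c : Localization (nonZeroDivisors R'), σs c = c →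
      ∃ r : R', σ' r = r ∧ algebraMap R' (Localization (nonZeroDivisors R')) r = c :=
  fun _ hc => IsSimpleDiff.exists_constant_eq_of_isLocalization hPV.2.1 hσs _ le_rfl hc

/-- The constants of the total quotient ring of a Picard-Vessiot ring `R'`
are the constants of `R'`. -/
theorem statement_16 {K : Type} [Field K] [CharZero K] (σK : K ≃+* K)
    {n : ℕ} (A : (Matrix (Fin n) (Fin n) K)ˣ)
    {R' : Type} [CommRing R'] [Algebra K R'] (σ' : R' ≃+* R')
    (hPV : IsPVRing σK σ' A)
    (σs : Localization (nonZeroDivisors R') ≃+* Localization (nonZeroDivisors R'))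
    (hσs : ∀ x : R',
      σs (algebraMap R' (Localization (nonZeroDivisors R')) x) =
        algebraMap R' (Localization (nonZeroDivisors R')) (σ' x)) :
    ∀ c : Localization (nonZeroDivisors R'), σs c = c →
      ∃ r : R', σ' r = r ∧ algebraMap R' (Localization (nonZeroDivisors R')) r = c :=
  statement_16_general σK A σ' hPV σs hσs

end PV
end
end

section
/- Let K be a difference field of characteristic zero, A ∈ GL_n(K), and R' a Picard-Vessiot ring for σ(X) = AX over K whose primitive idempotents e_0, …, e_{ℓ−1} are permuted cyclically by σ, with e_i = σ^i(e_0) and σ(e_{ℓ−1}) = e_0. Let R* be the total quotient ring of R' with σ extended canonically. Then Fix(σ^ℓ)(e_0R*) = e_0·C_{R'}: every element a ∈ e_0R* with σ^ℓ(a) = a lies in e_0·C_{R'}. -/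
/-! For `a ∈ e₀R*` fixed by `σ^ℓ`, the orbit sum `b = a + σ a + ⋯ + σ^(ℓ-1) a` is fixed by `σ`.
Its ideal of denominators `{r ∈ R' | r b ∈ R'}` is then a `σ`-ideal containing a nonzerodivisor,
hence all of `R'` by simplicity, so `b` is a constant of `R'`. Finally `σ^j a` lies in `e_j R*`
and the `e_j` are orthogonal, so `e₀ b = a`. -/

open scoped TensorProduct

noncomputable section

namespace PV

set_option synthInstance.maxHeartbeats 1000000

section DenominatorIdeal

variable {R S : Type*} [CommRing R] [CommRing S] [Algebra R S]

def denIdeal (b : S) : Ideal R :=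
  (LinearMap.range (Algebra.linearMap R S)).comap (LinearMap.toSpanSingleton R S b)

theorem mem_denIdeal {b : S} {r : R} : r ∈ denIdeal b ↔ ∃ s, algebraMap R S s = r • b :=
  Iff.rfl

theorem map_mem_denIdeal {σ : R ≃+* R} {σS : S ≃+* S} (hσ : DiffCompat σ σS) {b : S}
    (hb : σS b = b) {r : R} (hr : r ∈ denIdeal b) : σ r ∈ denIdeal b := by
  obtain ⟨s, hs⟩ := mem_denIdeal.1 hr
  refine mem_denIdeal.2 ⟨σ s, ?_⟩
  rw [← hσ, hs, Algebra.smul_def, Algebra.smul_def, map_mul, hσ, hb]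

theorem IsSimpleDiff.exists_fixed_algebraMap_eq [IsFractionRing R S] {σ : R ≃+* R}
    {σS : S ≃+* S} (hsimple : IsSimpleDiff σ) (hσ : DiffCompat σ σS) {b : S} (hb : σS b = b) :
    ∃ c, σ c = c ∧ algebraMap R S c = b := by
  obtain ⟨⟨r, s⟩, hrs⟩ := IsLocalization.surj (nonZeroDivisors R) b
  have hs : (s : R) ∈ denIdeal b :=
    mem_denIdeal.2 ⟨r, by rw [Algebra.smul_def, mul_comm, hrs]⟩
  have hone : (1 : R) ∈ denIdeal b := by
    rcases hsimple _ (fun _ => map_mem_denIdeal hσ hb) with hbot | htop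
    · rw [hbot, Ideal.mem_bot] at hs
      have h10 : (1 : R) = 0 := (mem_nonZeroDivisors_iff.1 s.2).2 1 (by rw [hs, mul_zero])
      rw [h10]
      exact zero_mem _
    · rw [htop]
      exact Submodule.mem_top
  obtain ⟨c, hc⟩ := mem_denIdeal.1 hone
  rw [one_smul] at hc
  exact ⟨c, IsFractionRing.injective R S (by rw [← hσ, hc, hb]), hc⟩

end DenominatorIdeal

theorem map_sum_range_iterate_of_isPeriodicPt {M F : Type*} [AddCommMonoid M]
    [FunLike F M M] [AddMonoidHomClass F M M] {f : F} {ℓ : ℕ} {a : M}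
    (ha : Function.IsPeriodicPt f ℓ a) :
    f (∑ j ∈ Finset.range ℓ, f^[j] a) = ∑ j ∈ Finset.range ℓ, f^[j] a := by
  cases ℓ with
  | zero => simp
  | succ k =>
    simp only [map_sum, ← Function.iterate_succ_apply' f]
    rw [Finset.sum_range_succ, ha.eq, Finset.sum_range_succ' (fun j => f^[j] a)]
    rfl

theorem DiffCompat.iterate_algebraMap {k R : Type*} [CommRing k] [CommRing R] [Algebra k R]
    {σk : k ≃+* k} {σR : R ≃+* R} (h : DiffCompat σk σR) (m : ℕ) (x : k) :
    σR^[m] (algebraMap k R x) = algebraMap k R (σk^[m] x) :=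
  (Function.Semiconj.iterate_right (fun y => (h y).symm) m x).symm

section CyclicDecomposition

variable {R : Type*} [CommRing R] {σ : R ≃+* R} {ℓ : ℕ} {e : Fin ℓ → R}

theorem IsDecomp.iterate_apply_zero (he : IsDecomp σ e) (hℓ : 0 < ℓ) {j : ℕ} (hj : j < ℓ) :
    σ^[j] (e ⟨0, hℓ⟩) = e ⟨j, hj⟩ := by
  induction j with
  | zero => rfl
  | succ k ih =>
    rw [Function.iterate_succ_apply', ih (by omega), he.2.2.2.2]
    exact congrArg e (Fin.ext (Nat.mod_eq_of_lt hj))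

theorem IsDecomp.mul_sum_range_iterate {S : Type*} [CommRing S] [Algebra R S] {σS : S ≃+* S}
    (he : IsDecomp σ e) (hℓ : 0 < ℓ) (hσ : DiffCompat σ σS) {a : S}
    (ha : algebraMap R S (e ⟨0, hℓ⟩) * a = a) :
    algebraMap R S (e ⟨0, hℓ⟩) * ∑ j ∈ Finset.range ℓ, σS^[j] a = a := by
  rw [Finset.mul_sum, Finset.sum_eq_single_of_mem 0 (Finset.mem_range.2 hℓ)]
  · exact ha
  · intro j hj hj0
    have hjℓ : j < ℓ := Finset.mem_range.1 hj
    have hsupp : σS^[j] a = algebraMap R S (e ⟨j, hjℓ⟩) * σS^[j] a := by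
      conv_lhs => rw [← ha, iter_mul, hσ.iterate_algebraMap, he.iterate_apply_zero hℓ hjℓ]
    rw [hsupp, ← mul_assoc, ← map_mul, he.2.1 (Fin.ne_of_val_ne (Ne.symm hj0)), map_zero,
      zero_mul]

end CyclicDecomposition

theorem statement_17_general {K : Type} [Field K] (σK : K ≃+* K)
    {n : ℕ} (A : (Matrix (Fin n) (Fin n) K)ˣ)
    {R' : Type} [CommRing R'] [Algebra K R'] (σ' : R' ≃+* R')
    (hPV : IsPVRing σK σ' A)
    {ℓ : ℕ} (hℓ : 0 < ℓ) (e : Fin ℓ → R') (he : IsDecomp σ' e)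
    (σs : Localization (nonZeroDivisors R') ≃+* Localization (nonZeroDivisors R'))
    (hσs : ∀ x : R',
      σs (algebraMap R' (Localization (nonZeroDivisors R')) x) =
        algebraMap R' (Localization (nonZeroDivisors R')) (σ' x)) :
    ∀ a : Localization (nonZeroDivisors R'),
      algebraMap R' (Localization (nonZeroDivisors R')) (e ⟨0, hℓ⟩) * a = a →
      (⇑σs)^[ℓ] a = a →
      ∃ c : R', σ' c = c ∧
        a = algebraMap R' (Localization (nonZeroDivisors R')) (e ⟨0, hℓ⟩ * c) := by
  intro a hea hfix
  obtain ⟨c, hc, hcb⟩ := hPV.2.1.exists_fixed_algebraMap_eq hσs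
    (map_sum_range_iterate_of_isPeriodicPt (f := σs) hfix)
  refine ⟨c, hc, ?_⟩
  rw [map_mul, hcb, he.mul_sum_range_iterate hℓ hσs hea]

/-- With `e₀, …, e_{ℓ-1}` the primitive idempotents of a Picard-Vessiot ring
`R'`, permuted cyclically by `σ`, one has `Fix(σ^ℓ)(e₀R*) = e₀ · C_{R'}` inside the total
quotient ring `R*`. -/
theorem statement_17 {K : Type} [Field K] [CharZero K] (σK : K ≃+* K)
    {n : ℕ} (A : (Matrix (Fin n) (Fin n) K)ˣ)
    {R' : Type} [CommRing R'] [Algebra K R'] (σ' : R' ≃+* R')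
    (hPV : IsPVRing σK σ' A)
    {ℓ : ℕ} (hℓ : 0 < ℓ) (e : Fin ℓ → R') (he : IsDecomp σ' e)
    (σs : Localization (nonZeroDivisors R') ≃+* Localization (nonZeroDivisors R'))
    (hσs : ∀ x : R',
      σs (algebraMap R' (Localization (nonZeroDivisors R')) x) =
        algebraMap R' (Localization (nonZeroDivisors R')) (σ' x)) :
    ∀ a : Localization (nonZeroDivisors R'),
      algebraMap R' (Localization (nonZeroDivisors R')) (e ⟨0, hℓ⟩) * a = a →
      (⇑σs)^[ℓ] a = a →
      ∃ c : R', σ' c = c ∧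
        a = algebraMap R' (Localization (nonZeroDivisors R')) (e ⟨0, hℓ⟩ * c) :=
  statement_17_general σK A σ' hPV hℓ e he σs hσs

end PV
end
end
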